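/- arXiv:1505.00240 — 8 statements merged into one kernel-verified Lean document; each statement's English description precedes it below -/
import Mathlib

section
/- Let μ be a Borel probability measure on [0,∞) with μ[x+h,∞) ≤ λ·μ[x,∞) for all x ≥ 0 (h > 0, λ ∈ [0,1)). Then for any non-decreasing g: ℝ → [0,∞) with g(0)=0, ∫g² dμ ≤ (2/(1−λ))² · ∫(g(x) − g(x−h))² dμ(x). -/
/-!
Write `‖·‖` for the `L²(μ)` norm. Every superlevel set of a monotone `g ≥ 0` with `g 0 = 0`
is a ray `[a, ∞)` or `(a, ∞)` with `a ≥ 0`, so by the layer-cake formula the tail condition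
turns into `‖g(· - h)‖ ≤ √λ ‖g‖`. Minkowski's inequality for `g = (g - g(· - h)) + g(· - h)`
then gives `(1 - √λ) ‖g‖ ≤ ‖g - g(· - h)‖` whenever `‖g‖ < ∞`; truncating `g` at level `n`
and Fatou's lemma remove that assumption. Finally
`1 / (1 - √λ) = (1 + √λ) / (1 - λ) ≤ 2 / (1 - λ)`.
-/

open MeasureTheory Set Filter Topology
open scoped ENNReal

theorem IsUpperSet.eq_Ici_or_eq_Ioi {α : Type*} [ConditionallyCompleteLinearOrder α] {S : Set α}
    (hS : IsUpperSet S) (hne : S.Nonempty) (hbdd : BddBelow S) :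
    S = Ici (sInf S) ∨ S = Ioi (sInf S) := by
  by_cases hmem : sInf S ∈ S
  · exact Or.inl <| (hS.Ici_subset hmem).antisymm' fun x hx => csInf_le hbdd hx
  · refine Or.inr <| Subset.antisymm (fun x hx => ?_) fun x hx => ?_
    · exact (csInf_le hbdd hx).lt_of_ne fun hx' => hmem (hx' ▸ hx)
    · obtain ⟨y, hy, hyx⟩ := exists_lt_of_csInf_lt hne hx
      exact hS hyx.le hy

theorem ENNReal.le_inv_one_sub_mul_of_le_add_mul {a b s : ℝ≥0∞} (hs : s < 1) (ha : a ≠ ∞)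
    (h : a ≤ b + s * a) : a ≤ (1 - s)⁻¹ * b := by
  rw [← ENNReal.div_eq_inv_mul, ENNReal.le_div_iff_mul_le (.inl (tsub_pos_of_lt hs).ne')
    (.inl (ENNReal.sub_ne_top ENNReal.one_ne_top)), mul_comm, ENNReal.sub_mul fun _ _ => ha,
    one_mul]
  exact tsub_le_iff_right.2 h

theorem lintegral_ofReal_sq_eq_eLpNorm_sq {α : Type*} [MeasurableSpace α] (μ : Measure α)
    (f : α → ℝ) : ∫⁻ x, ENNReal.ofReal (f x ^ 2) ∂μ = eLpNorm f 2 μ ^ 2 := by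
  have := eLpNorm_nnreal_pow_eq_lintegral (f := f) (μ := μ) (p := 2) two_ne_zero
  simp only [NNReal.coe_ofNat, ENNReal.rpow_two, ENNReal.coe_ofNat] at this
  rw [this]
  congr 1 with x
  rw [Real.enorm_eq_ofReal_abs, ← ENNReal.ofReal_pow (abs_nonneg _), sq_abs]

theorem inv_one_sub_sqrt_le {l : ℝ} (hl0 : 0 ≤ l) (hl1 : l < 1) :
    (1 - √l)⁻¹ ≤ 2 / (1 - l) := by
  have hsqrt : √l < 1 := Real.sqrt_one ▸ Real.sqrt_lt_sqrt hl0 hl1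
  rw [inv_eq_one_div, div_le_div_iff₀ (by linarith) (by linarith)]
  nlinarith [Real.sq_sqrt hl0]

def HasGeometricTail (μ : Measure ℝ) (h : ℝ) (c : ℝ≥0∞) : Prop :=
  ∀ x : ℝ, 0 ≤ x → μ (Ici (x + h)) ≤ c * μ (Ici x)

namespace HasGeometricTail

variable {μ : Measure ℝ} {h : ℝ} {c s : ℝ≥0∞} {g : ℝ → ℝ}

theorem measure_Ioi_add_le (hμ : HasGeometricTail μ h c) {b : ℝ} (hb : 0 ≤ b) :
    μ (Ioi (b + h)) ≤ c * μ (Ioi b) := by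
  obtain ⟨u, hu_anti, hu_gt, hu_lim⟩ := exists_seq_strictAnti_tendsto b
  have hIoi (a : ℝ) : μ (Ioi (b + a)) = ⨆ n, μ (Ici (u n + a)) := by
    rw [← iUnion_Ici_eq_Ioi_of_lt_of_tendsto (fun n => by linarith [hu_gt n])
      (hu_lim.add_const a)]
    exact Monotone.measure_iUnion fun m n hmn => Ici_subset_Ici.2 <| by
      linarith [hu_anti.antitone hmn]
  have hIoi_zero := hIoi 0
  simp only [add_zero] at hIoi_zero
  rw [hIoi h, hIoi_zero, ENNReal.mul_iSup]
  exact iSup_mono fun n => hμ (u n) (hb.trans (hu_gt n).le)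

theorem measure_preimage_sub_le (hμ : HasGeometricTail μ h c) {S : Set ℝ} (hS : IsUpperSet S)
    (hS0 : S ⊆ Ici 0) : μ ((· - h) ⁻¹' S) ≤ c * μ S := by
  rcases S.eq_empty_or_nonempty with rfl | hne
  · simp
  have ha : 0 ≤ sInf S := le_csInf hne hS0
  rcases hS.eq_Ici_or_eq_Ioi hne ⟨0, hS0⟩ with hS' | hS' <;> rw [hS']
  · convert hμ _ ha using 2
    ext x; simp
  · convert hμ.measure_Ioi_add_le ha using 2
    ext x; simp

theorem lintegral_comp_sub_le (hμ : HasGeometricTail μ h c) {F : ℝ → ℝ} (hF : Monotone F)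
    (hF0 : ∀ x, 0 ≤ F x) (hFz : F 0 = 0) :
    ∫⁻ x, ENNReal.ofReal (F (x - h)) ∂μ ≤ c * ∫⁻ x, ENNReal.ofReal (F x) ∂μ := by
  rw [lintegral_eq_lintegral_meas_lt μ (.of_forall fun x => hF0 _)
      (hF.measurable.comp (measurable_sub_const h)).aemeasurable,
    lintegral_eq_lintegral_meas_lt μ (.of_forall hF0) hF.measurable.aemeasurable,
    ← lintegral_const_mul (f := fun t => μ {x | t < F x}) c
      (Antitone.measurable fun s t hst => measure_mono fun x (hx : t < F x) => hst.trans_lt hx)]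
  refine setLIntegral_mono' measurableSet_Ioi fun t (ht : 0 < t) => ?_
  refine hμ.measure_preimage_sub_le (S := {x | t < F x}) (fun x y hxy hx => hx.trans_le (hF hxy))
    fun x (hx : t < F x) => ?_
  exact le_of_not_gt fun hx0 => (hF hx0.le).not_gt (hFz.symm ▸ ht.trans hx)

theorem eLpNorm_comp_sub_le (hμ : HasGeometricTail μ h (s ^ 2)) (hg : Monotone g)
    (hg0 : ∀ x, 0 ≤ g x) (hgz : g 0 = 0) :
    eLpNorm (fun x => g (x - h)) 2 μ ≤ s * eLpNorm g 2 μ := by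
  have hsq := hμ.lintegral_comp_sub_le (F := fun x => g x ^ 2)
    (fun x y hxy => pow_le_pow_left₀ (hg0 x) (hg hxy) 2) (fun x => sq_nonneg _) (by simp [hgz])
  rw [lintegral_ofReal_sq_eq_eLpNorm_sq μ (fun x => g (x - h)),
    lintegral_ofReal_sq_eq_eLpNorm_sq, ← mul_pow] at hsq
  exact (ENNReal.pow_le_pow_left_iff two_ne_zero).1 hsq

theorem eLpNorm_le_of_ne_top (hμ : HasGeometricTail μ h (s ^ 2)) (hs : s < 1)
    (hg : Monotone g) (hg0 : ∀ x, 0 ≤ g x) (hgz : g 0 = 0) (hfin : eLpNorm g 2 μ ≠ ∞) :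
    eLpNorm g 2 μ ≤ (1 - s)⁻¹ * eLpNorm (fun x => g x - g (x - h)) 2 μ := by
  have hgh : Measurable fun x => g (x - h) := hg.measurable.comp (measurable_sub_const h)
  refine ENNReal.le_inv_one_sub_mul_of_le_add_mul hs hfin ?_
  calc eLpNorm g 2 μ = eLpNorm ((fun x => g x - g (x - h)) + fun x => g (x - h)) 2 μ := by
        congr with x; simp
    _ ≤ eLpNorm (fun x => g x - g (x - h)) 2 μ + eLpNorm (fun x => g (x - h)) 2 μ :=
        eLpNorm_add_le (hg.measurable.sub hgh).aestronglyMeasurable hgh.aestronglyMeasurable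
          one_le_two
    _ ≤ _ := add_le_add_right (hμ.eLpNorm_comp_sub_le hg hg0 hgz) _

theorem eLpNorm_le [IsFiniteMeasure μ] (hμ : HasGeometricTail μ h (s ^ 2)) (hs : s < 1)
    (hg : Monotone g) (hg0 : ∀ x, 0 ≤ g x) (hgz : g 0 = 0) :
    eLpNorm g 2 μ ≤ (1 - s)⁻¹ * eLpNorm (fun x => g x - g (x - h)) 2 μ := by
  set gn : ℕ → ℝ → ℝ := fun n x => min (g x) n
  have hgn_mono (n : ℕ) : Monotone (gn n) := hg.min monotone_const
  have hgn_bound (n : ℕ) :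
      eLpNorm (gn n) 2 μ ≤ (1 - s)⁻¹ * eLpNorm (fun x => g x - g (x - h)) 2 μ := by
    have hfin : eLpNorm (gn n) 2 μ ≠ ∞ := (MemLp.of_bound
      (hgn_mono n).measurable.aestronglyMeasurable n
      (.of_forall fun x => by simp [gn, abs_of_nonneg, hg0])).eLpNorm_ne_top
    refine (hμ.eLpNorm_le_of_ne_top hs (hgn_mono n) (fun x => le_min (hg0 x) n.cast_nonneg)
      (by simp [gn, hgz]) hfin).trans (mul_le_mul_right (eLpNorm_mono fun x => ?_) _)
    simpa using abs_min_sub_min_le_max (g x) n (g (x - h)) n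
  have hgn_lim (x : ℝ) : Tendsto (fun n => gn n x) atTop (𝓝 (g x)) :=
    tendsto_const_nhds.congr' <| (eventually_ge_atTop ⌈g x⌉₊).mono fun n hn =>
      (min_eq_left ((Nat.le_ceil _).trans (Nat.cast_le.2 hn))).symm
  calc eLpNorm g 2 μ ≤ atTop.liminf fun n => eLpNorm (gn n) 2 μ :=
        Lp.eLpNorm_lim_le_liminf_eLpNorm (fun n => (hgn_mono n).measurable.aestronglyMeasurable)
          g (.of_forall hgn_lim)
    _ ≤ _ := liminf_le_of_frequently_le' (.of_forall hgn_bound)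

end HasGeometricTail

theorem stmt1_general (μ : Measure ℝ) [IsProbabilityMeasure μ]
    (h l : ℝ) (hl0 : 0 ≤ l) (hl1 : l < 1)
    (htail : ∀ x : ℝ, 0 ≤ x → μ (Set.Ici (x + h)) ≤ ENNReal.ofReal l * μ (Set.Ici x))
    (g : ℝ → ℝ) (hg : Monotone g) (hg0 : ∀ x, 0 ≤ g x) (hgz : g 0 = 0) :
    ∫⁻ x, ENNReal.ofReal ((g x) ^ 2) ∂μ ≤
      ENNReal.ofReal ((2 / (1 - l)) ^ 2) *
        ∫⁻ x, ENNReal.ofReal ((g x - g (x - h)) ^ 2) ∂μ := by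
  have hμ : HasGeometricTail μ h (ENNReal.ofReal √l ^ 2) := by
    rwa [← ENNReal.ofReal_pow (Real.sqrt_nonneg l), Real.sq_sqrt hl0]
  have hsqrt : √l < 1 := Real.sqrt_one ▸ Real.sqrt_lt_sqrt hl0 hl1
  have hconst : (1 - ENNReal.ofReal √l)⁻¹ ≤ ENNReal.ofReal (2 / (1 - l)) := by
    rw [← ENNReal.ofReal_one, ← ENNReal.ofReal_sub _ (Real.sqrt_nonneg l),
      ← ENNReal.ofReal_inv_of_pos (by linarith)]
    exact ENNReal.ofReal_le_ofReal (inv_one_sub_sqrt_le hl0 hl1)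
  have key := (hμ.eLpNorm_le (ENNReal.ofReal_lt_one.2 hsqrt) hg hg0 hgz).trans
    (mul_le_mul_left hconst _)
  rw [lintegral_ofReal_sq_eq_eLpNorm_sq, lintegral_ofReal_sq_eq_eLpNorm_sq,
    ENNReal.ofReal_pow (div_pos two_pos (sub_pos.2 hl1)).le, ← mul_pow]
  exact pow_le_pow_left₀ zero_le key 2

theorem stmt1 (μ : Measure ℝ) [IsProbabilityMeasure μ]
    (h l : ℝ) (hh : 0 < h) (hl0 : 0 ≤ l) (hl1 : l < 1)
    (hsupp : μ (Set.Iio 0) = 0)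
    (htail : ∀ x : ℝ, 0 ≤ x → μ (Set.Ici (x + h)) ≤ ENNReal.ofReal l * μ (Set.Ici x))
    (g : ℝ → ℝ) (hg : Monotone g) (hg0 : ∀ x, 0 ≤ g x) (hgz : g 0 = 0) :
    ∫⁻ x, ENNReal.ofReal ((g x) ^ 2) ∂μ ≤
      ENNReal.ofReal ((2 / (1 - l)) ^ 2) *
        ∫⁻ x, ENNReal.ofReal ((g x - g (x - h)) ^ 2) ∂μ :=
  stmt1_general μ h l hl0 hl1 htail g hg hg0 hgz
end

section
/- Let μ be a symmetric Borel probability measure on ℝ with μ[x+h,∞) ≤ λ·μ[x,∞) for all x ≥ 0 (h > 0, λ ∈ [0,1)). Let f: ℝ → ℝ be convex, non-decreasing, non-negative with f(x)=0 for x ≤ 0. Then ∫(e^{f/2} − e^{−f/2})² dμ ≤ (4/(1−λ)²)·∫ e^{f(x)}(f(x) − f(x−h))² dμ(x). -/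
open MeasureTheory Set Real

-- increments of a convex function are monotone
lemma incr_mono {f : ℝ → ℝ} (hc : ConvexOn ℝ Set.univ f) {h : ℝ} (hh : 0 < h) :
    Monotone (fun x => f x - f (x - h)) := by
  intro x y hxy
  rcases eq_or_lt_of_le hxy with rfl | hxy
  · exact le_rfl
  simp only
  set d : ℝ := y - x with hd
  have hd0 : 0 < d := by simp [hd]; linarith
  have hD : 0 < d + h := by linarith
  have w1 : (0:ℝ) ≤ d / (d + h) := by positivity
  have w2 : (0:ℝ) ≤ h / (d + h) := by positivity
  have wsum : d / (d + h) + h / (d + h) = 1 := by field_simp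
  have h1 : f x ≤ (d / (d+h)) * f (x - h) + (h / (d+h)) * f y := by
    have := hc.2 (Set.mem_univ (x - h)) (Set.mem_univ y) w1 w2 wsum
    simpa [smul_eq_mul, show (d / (d+h)) * (x-h) + (h / (d+h)) * y = x by field_simp; ring] using this
  have h2 : f (y - h) ≤ (h / (d+h)) * f (x - h) + (d / (d+h)) * f y := by
    have := hc.2 (Set.mem_univ (x - h)) (Set.mem_univ y) w2 w1 (by linarith [wsum])
    simpa [smul_eq_mul, show (h / (d+h)) * (x-h) + (d / (d+h)) * y = y - h by field_simp; ring] using this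
  have e1 : (d / (d+h)) * f (x-h) + (h / (d+h)) * f (x-h) = f (x-h) := by
    rw [← add_mul, wsum, one_mul]
  have e2 : (d / (d+h)) * f y + (h / (d+h)) * f y = f y := by
    rw [← add_mul, wsum, one_mul]
  linarith

lemma tailIoi {μ : Measure ℝ} {h l : ℝ} (hh : 0 < h)
    (htail : ∀ x : ℝ, 0 ≤ x → μ (Set.Ici (x + h)) ≤ ENNReal.ofReal l * μ (Set.Ici x))
    {a : ℝ} (ha : 0 ≤ a) : μ (Set.Ioi (a + h)) ≤ ENNReal.ofReal l * μ (Set.Ioi a) := by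
  have hU : Set.Ioi (a + h) = ⋃ n : ℕ, Set.Ici (a + 1/(n+1) + h) := by
    ext x
    simp only [Set.mem_Ioi, Set.mem_iUnion, Set.mem_Ici]
    constructor
    · intro hx
      obtain ⟨n, hn⟩ := exists_nat_one_div_lt (show (0:ℝ) < x - (a + h) by linarith)
      exact ⟨n, by linarith⟩
    · rintro ⟨n, hn⟩
      have : (0:ℝ) < 1/(n+1) := by positivity
      linarith
  have hmonoset : Monotone (fun n : ℕ => Set.Ici (a + 1/(n+1:ℝ) + h)) := by
    intro n m hnm
    apply Set.Ici_subset_Ici.2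
    have h1 : (1:ℝ)/(m+1) ≤ 1/(n+1) := by
      apply one_div_le_one_div_of_le (by positivity)
      have : (n:ℝ) ≤ m := by exact_mod_cast hnm
      linarith
    linarith
  rw [hU, hmonoset.directed_le.measure_iUnion]
  apply iSup_le
  intro n
  calc μ (Set.Ici (a + 1/(n+1:ℝ) + h)) ≤ ENNReal.ofReal l * μ (Set.Ici (a + 1/(n+1:ℝ))) :=
        htail _ (by positivity)
    _ ≤ ENNReal.ofReal l * μ (Set.Ioi a) := by
        apply mul_le_mul_right
        apply measure_mono
        intro y hy
        simp only [Set.mem_Ici] at hy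
        simp only [Set.mem_Ioi]
        have : (0:ℝ) < 1/(n+1) := by positivity
        linarith

lemma lemA {μ : Measure ℝ} {h l : ℝ} (hh : 0 < h)
    (htail : ∀ x : ℝ, 0 ≤ x → μ (Set.Ici (x + h)) ≤ ENNReal.ofReal l * μ (Set.Ici x))
    (ψ : ℝ → ℝ) (hm : Monotone ψ) (hz : ∀ x ≤ 0, ψ x = 0) :
    ∫⁻ x, ENNReal.ofReal (ψ (x - h)) ∂μ ≤ ENNReal.ofReal l * ∫⁻ x, ENNReal.ofReal (ψ x) ∂μ := by
  have hnn : ∀ x, 0 ≤ ψ x := fun x => by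
    rcases le_total x 0 with hx | hx
    · exact (hz x hx).ge
    · calc (0:ℝ) = ψ 0 := (hz 0 le_rfl).symm
        _ ≤ ψ x := hm hx
  have hmeas : Measurable ψ := hm.measurable
  have hmeas2 : Measurable (fun x => ψ (x - h)) := hmeas.comp (measurable_id.sub_const h)
  rw [lintegral_eq_lintegral_meas_lt μ (Filter.Eventually.of_forall (fun x => hnn _)) hmeas2.aemeasurable,
      lintegral_eq_lintegral_meas_lt μ (Filter.Eventually.of_forall hnn) hmeas.aemeasurable,
      ← lintegral_const_mul' _ _ ENNReal.ofReal_ne_top]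
  apply setLIntegral_mono
  · have hanti : Antitone (fun t : ℝ => ENNReal.ofReal l * μ {a : ℝ | t < ψ a}) := by
      intro t s hts
      apply mul_le_mul_right
      apply measure_mono
      intro y hy
      exact lt_of_le_of_lt hts hy
    exact hanti.measurable
  intro t ht
  simp only [Set.mem_Ioi] at ht
  set S := {y : ℝ | t < ψ y} with hSdef
  have hup : ∀ ⦃y z : ℝ⦄, y ∈ S → y ≤ z → z ∈ S := fun y z hy hyz =>
    lt_of_lt_of_le hy (hm hyz)
  have hS0 : S ⊆ Set.Ioi 0 := by
    intro y hy
    simp only [Set.mem_Ioi]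
    by_contra hy0
    push_neg at hy0
    have h1 : ψ y = 0 := hz y hy0
    have h2 : t < ψ y := hy
    rw [h1] at h2
    linarith
  have hset : {x : ℝ | t < ψ (x - h)} = {x : ℝ | x - h ∈ S} := rfl
  by_cases hne : S.Nonempty
  · have hbdd : BddBelow S := ⟨0, fun y hy => (hS0 hy).le⟩
    set a := sInf S with hadef
    have ha0 : 0 ≤ a := le_csInf hne fun y hy => (hS0 hy).le
    by_cases haS : a ∈ S
    · have hSeq : S = Set.Ici a :=
        subset_antisymm (fun y hy => csInf_le hbdd hy) (fun y hy => hup haS hy)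
      have hshift : {x : ℝ | t < ψ (x - h)} = Set.Ici (a + h) := by
        rw [hset, hSeq]
        ext x
        simp only [Set.mem_setOf_eq, Set.mem_Ici]
        constructor <;> intro hx <;> linarith
      rw [hshift, hSeq]
      exact htail a ha0
    · have hSeq : S = Set.Ioi a := by
        apply subset_antisymm
        · intro y hy
          have h1 : a ≤ y := csInf_le hbdd hy
          rcases eq_or_lt_of_le h1 with rfl | h2
          · exact absurd hy haS
          · exact h2
        · intro y hy
          obtain ⟨s, hs, hsy⟩ := exists_lt_of_csInf_lt hne hy
          exact hup hs hsy.le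
      have hshift : {x : ℝ | t < ψ (x - h)} = Set.Ioi (a + h) := by
        rw [hset, hSeq]
        ext x
        simp only [Set.mem_setOf_eq, Set.mem_Ioi]
        constructor <;> intro hx <;> linarith
      rw [hshift, hSeq]
      exact tailIoi hh htail ha0
  · rw [Set.not_nonempty_iff_eq_empty] at hne
    have : {x : ℝ | t < ψ (x - h)} = ∅ := by
      rw [hset, hne]
      simp
    rw [this]
    simp

lemma lemAiter {μ : Measure ℝ} {h l : ℝ} (hh : 0 < h)
    (htail : ∀ x : ℝ, 0 ≤ x → μ (Set.Ici (x + h)) ≤ ENNReal.ofReal l * μ (Set.Ici x))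
    (ψ : ℝ → ℝ) (hm : Monotone ψ) (hz : ∀ x ≤ 0, ψ x = 0) : ∀ k : ℕ,
    ∫⁻ x, ENNReal.ofReal (ψ (x - k * h)) ∂μ ≤
      (ENNReal.ofReal l)^k * ∫⁻ x, ENNReal.ofReal (ψ x) ∂μ := by
  intro k
  induction k with
  | zero => simp
  | succ k ih =>
    set ψ' : ℝ → ℝ := fun y => ψ (y - k * h) with hψ'
    have hm' : Monotone ψ' := fun y z hyz => hm (by simp [sub_le_sub_right, hyz])
    have hz' : ∀ x ≤ 0, ψ' x = 0 := fun x hx => hz _ (by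
      have h2 : (0:ℝ) ≤ k * h := by positivity
      show x - k * h ≤ 0
      linarith)
    have key : ∀ x : ℝ, ψ (x - ((k:ℕ)+1 : ℕ) * h) = ψ' (x - h) := fun x => by
      simp only [hψ']
      congr 1
      push_cast
      ring
    calc ∫⁻ x, ENNReal.ofReal (ψ (x - ((k:ℕ)+1 : ℕ) * h)) ∂μ
        = ∫⁻ x, ENNReal.ofReal (ψ' (x - h)) ∂μ := lintegral_congr fun x => by rw [key x]
      _ ≤ ENNReal.ofReal l * ∫⁻ x, ENNReal.ofReal (ψ' x) ∂μ := lemA hh htail ψ' hm' hz'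
      _ ≤ ENNReal.ofReal l * ((ENNReal.ofReal l)^k * ∫⁻ x, ENNReal.ofReal (ψ x) ∂μ) :=
          mul_le_mul_right ih _
      _ = (ENNReal.ofReal l)^(k+1) * ∫⁻ x, ENNReal.ofReal (ψ x) ∂μ := by ring

lemma pointwise_bound (f : ℝ → ℝ) (hmono : Monotone f) (hpos : ∀ x, 0 ≤ f x)
    (hzero : ∀ x ≤ 0, f x = 0) {h α : ℝ} (hh : 0 < h)
    (hα0 : 0 < α) (hα1 : α < 1) (x : ℝ) :
    (Real.exp (f x / 2) - Real.exp (-(f x) / 2)) ^ 2 ≤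
      (1 - α)⁻¹ * ∑ k ∈ Finset.range (⌈x/h⌉₊),
        (α⁻¹)^k * (Real.exp (f (x - k*h)) * (f (x - k*h) - f (x - k*h - h))^2) := by
  set N := ⌈x/h⌉₊ with hN
  set F : ℕ → ℝ := fun k => Real.exp (f (x - k * h) / 2) with hF
  have hxN : x ≤ (N:ℝ) * h := by
    have h1 : x / h ≤ (N:ℝ) := Nat.le_ceil (x / h)
    calc x = (x / h) * h := by field_simp
      _ ≤ (N:ℝ) * h := mul_le_mul_of_nonneg_right h1 hh.le
  have hFN : F N = 1 := by
    simp only [hF]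
    rw [hzero _ (by linarith)]
    simp
  have hF0 : F 0 = Real.exp (f x / 2) := by simp [hF]
  have hFpos : ∀ k, 0 < F k := fun k => Real.exp_pos _
  set A : ℕ → ℝ := fun k => F k - F (k+1) with hA
  have hgnn : ∀ k : ℕ, 0 ≤ f (x - k*h) - f (x - k*h - h) := by
    intro k
    have := hmono (show x - (k:ℝ)*h - h ≤ x - (k:ℝ)*h by linarith)
    linarith
  have hAnn : ∀ k, 0 ≤ A k := by
    intro k
    simp only [hA, hF, sub_nonneg]
    apply Real.exp_le_exp.2
    have harg : x - ((k:ℕ)+1:ℕ) * h ≤ x - (k:ℝ) * h := by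
      push_cast
      nlinarith
    have := hmono harg
    linarith
  have hAle : ∀ k : ℕ, A k ≤ F k * ((f (x - k*h) - f (x - k*h - h)) / 2) := by
    intro k
    have hfk1 : F (k+1) = F k * Real.exp (-((f (x - k*h) - f (x - k*h - h)) / 2)) := by
      simp only [hF]
      rw [← Real.exp_add]
      congr 1
      have harg : x - ((k:ℕ)+1:ℕ) * h = x - (k:ℝ)*h - h := by push_cast; ring
      rw [harg]
      ring
    have hexp : 1 - Real.exp (-((f (x - k*h) - f (x - k*h - h)) / 2)) ≤
        (f (x - k*h) - f (x - k*h - h)) / 2 := by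
      have := Real.add_one_le_exp (-((f (x - k*h) - f (x - k*h - h)) / 2))
      linarith
    calc A k = F k * (1 - Real.exp (-((f (x - k*h) - f (x - k*h - h)) / 2))) := by
          rw [hA]; simp only; rw [hfk1]; ring
      _ ≤ F k * ((f (x - k*h) - f (x - k*h - h)) / 2) :=
          mul_le_mul_of_nonneg_left hexp (hFpos k).le
  have hsum : ∑ k ∈ Finset.range N, A k = Real.exp (f x / 2) - 1 := by
    simp only [hA]
    rw [Finset.sum_range_sub' F N, hFN, hF0]
  have hCS : (∑ k ∈ Finset.range N, A k)^2 ≤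
      (∑ k ∈ Finset.range N, α^k) * (∑ k ∈ Finset.range N, A k^2 * (α⁻¹)^k) := by
    have key := Finset.sum_mul_sq_le_sq_mul_sq (Finset.range N)
      (fun k => Real.sqrt (α^k)) (fun k => A k / Real.sqrt (α^k))
    have hne : ∀ k : ℕ, Real.sqrt (α^k) ≠ 0 := fun k => by positivity
    have e1 : ∀ k : ℕ, Real.sqrt (α^k) * (A k / Real.sqrt (α^k)) = A k := fun k => by
      rw [mul_comm, div_mul_cancel₀ _ (hne k)]
    have e2 : ∀ k : ℕ, (Real.sqrt (α^k))^2 = α^k := fun k =>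
      Real.sq_sqrt (pow_nonneg hα0.le k)
    have e3 : ∀ k : ℕ, (A k / Real.sqrt (α^k))^2 = A k^2 * (α⁻¹)^k := fun k => by
      rw [div_pow, e2, div_eq_mul_inv, inv_pow]
    calc (∑ k ∈ Finset.range N, A k)^2
        = (∑ k ∈ Finset.range N, Real.sqrt (α^k) * (A k / Real.sqrt (α^k)))^2 := by
          congr 1; exact (Finset.sum_congr rfl fun k _ => (e1 k).symm)
      _ ≤ (∑ k ∈ Finset.range N, (Real.sqrt (α^k))^2) *
            (∑ k ∈ Finset.range N, (A k / Real.sqrt (α^k))^2) := key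
      _ = (∑ k ∈ Finset.range N, α^k) * (∑ k ∈ Finset.range N, A k^2 * (α⁻¹)^k) := by
          congr 1
          · exact Finset.sum_congr rfl fun k _ => e2 k
          · exact Finset.sum_congr rfl fun k _ => e3 k
  have hgeom : ∑ k ∈ Finset.range N, α^k ≤ (1-α)⁻¹ := by
    have hsummable : Summable (fun k : ℕ => α^k) := summable_geometric_of_lt_one hα0.le hα1
    have := Summable.sum_le_tsum (Finset.range N) (fun k _ => pow_nonneg hα0.le k) hsummable
    rwa [tsum_geometric_of_lt_one hα0.le hα1] at this
  have hQnn : 0 ≤ ∑ k ∈ Finset.range N, A k^2 * (α⁻¹)^k :=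
    Finset.sum_nonneg fun k _ => by positivity
  have hterm : ∀ k ∈ Finset.range N, 4 * (A k^2 * (α⁻¹)^k) ≤
      (α⁻¹)^k * (Real.exp (f (x - k*h)) * (f (x - k*h) - f (x - k*h - h))^2) := by
    intro k _
    have hFsq : F k ^ 2 = Real.exp (f (x - k*h)) := by
      simp only [hF]
      rw [sq, ← Real.exp_add]
      congr 1
      ring
    have h1 : A k ^ 2 ≤ (F k * ((f (x - k*h) - f (x - k*h - h)) / 2))^2 :=
      pow_le_pow_left₀ (hAnn k) (hAle k) 2
    have h2 : (F k * ((f (x - k*h) - f (x - k*h - h)) / 2))^2 =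
        Real.exp (f (x - k*h)) * (f (x - k*h) - f (x - k*h - h))^2 / 4 := by
      rw [mul_pow, hFsq]; ring
    have h3 : (0:ℝ) ≤ (α⁻¹)^k := by positivity
    nlinarith [h1, h2, h3, mul_le_mul_of_nonneg_right (h1.trans h2.le) h3]
  have hL1 : Real.exp (f x / 2) - Real.exp (-(f x)/2) ≤ 2 * (Real.exp (f x / 2) - 1) := by
    have h1 : Real.exp (f x / 2) * Real.exp (-(f x) / 2) = 1 := by
      rw [← Real.exp_add, show f x / 2 + -(f x)/2 = 0 by ring, Real.exp_zero]
    nlinarith [sq_nonneg (Real.exp (f x / 2) - 1), Real.exp_pos (f x / 2),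
      Real.exp_pos (-(f x)/2)]
  have hL0 : 0 ≤ Real.exp (f x / 2) - Real.exp (-(f x)/2) := by
    have h1 : -(f x)/2 ≤ f x / 2 := by have := hpos x; linarith
    have := Real.exp_le_exp.2 h1
    linarith
  have hE1 : (0:ℝ) ≤ Real.exp (f x / 2) - 1 := by
    have : (1:ℝ) ≤ Real.exp (f x / 2) := Real.one_le_exp (div_nonneg (hpos x) (by norm_num))
    linarith
  have h1α : (0:ℝ) < 1 - α := by linarith
  calc (Real.exp (f x / 2) - Real.exp (-(f x) / 2)) ^ 2
      ≤ (2 * (Real.exp (f x / 2) - 1))^2 := pow_le_pow_left₀ hL0 hL1 2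
    _ = 4 * (∑ k ∈ Finset.range N, A k)^2 := by rw [hsum]; ring
    _ ≤ 4 * ((∑ k ∈ Finset.range N, α^k) * (∑ k ∈ Finset.range N, A k^2 * (α⁻¹)^k)) := by
        nlinarith [hCS]
    _ ≤ 4 * ((1-α)⁻¹ * (∑ k ∈ Finset.range N, A k^2 * (α⁻¹)^k)) := by
        have := mul_le_mul_of_nonneg_right hgeom hQnn
        nlinarith [this]
    _ = (1-α)⁻¹ * (∑ k ∈ Finset.range N, 4 * (A k^2 * (α⁻¹)^k)) := by
        rw [← Finset.mul_sum]
        ring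
    _ ≤ (1 - α)⁻¹ * ∑ k ∈ Finset.range N,
        (α⁻¹)^k * (Real.exp (f (x - k*h)) * (f (x - k*h) - f (x - k*h - h))^2) := by
        apply mul_le_mul_of_nonneg_left (Finset.sum_le_sum hterm) (by positivity)

theorem stmt2 (μ : Measure ℝ) [IsProbabilityMeasure μ]
    (h l : ℝ) (hh : 0 < h) (hl0 : 0 ≤ l) (hl1 : l < 1)
    (hsym : μ.map (fun x => -x) = μ)
    (htail : ∀ x : ℝ, 0 ≤ x → μ (Set.Ici (x + h)) ≤ ENNReal.ofReal l * μ (Set.Ici x))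
    (f : ℝ → ℝ) (hconv : ConvexOn ℝ Set.univ f) (hmono : Monotone f)
    (hpos : ∀ x, 0 ≤ f x) (hzero : ∀ x ≤ 0, f x = 0) :
    ∫⁻ x, ENNReal.ofReal ((Real.exp (f x / 2) - Real.exp (-(f x) / 2)) ^ 2) ∂μ ≤
      ENNReal.ofReal (4 / (1 - l) ^ 2) *
        ∫⁻ x, ENNReal.ofReal (Real.exp (f x) * (f x - f (x - h)) ^ 2) ∂μ := by
  have hg_mono : Monotone (fun y => f y - f (y - h)) := incr_mono hconv hh
  have hg_nn : ∀ y : ℝ, 0 ≤ f y - f (y - h) := fun y => by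
    have := hmono (show y - h ≤ y by linarith)
    linarith
  set ψ : ℝ → ℝ := fun y => Real.exp (f y) * (f y - f (y - h))^2 with hψdef
  have hψ_mono : Monotone ψ := by
    intro y z hyz
    simp only [hψdef]
    exact mul_le_mul (Real.exp_le_exp.2 (hmono hyz))
      (pow_le_pow_left₀ (hg_nn y) (hg_mono hyz) 2) (by positivity) (Real.exp_pos _).le
  have hψ_zero : ∀ y ≤ 0, ψ y = 0 := fun y hy => by
    simp only [hψdef]
    rw [hzero y hy, hzero (y-h) (by linarith)]
    ring
  have hψ_meas : Measurable ψ := hψ_mono.measurable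
  set m : ℝ := max l (1/4) with hmdef
  have hm_l : l ≤ m := le_max_left _ _
  have hm_lb : (1/4:ℝ) ≤ m := le_max_right _ _
  have hm1 : m < 1 := max_lt hl1 (by norm_num)
  have hm0 : (0:ℝ) < m := by linarith
  set α : ℝ := Real.sqrt m with hαdef
  have hα0 : 0 < α := Real.sqrt_pos.2 hm0
  have hα1 : α < 1 := by
    have := Real.sqrt_lt_sqrt hm0.le hm1
    rwa [Real.sqrt_one] at this
  have hα2 : α^2 = m := Real.sq_sqrt hm0.le
  have hkey : (1 - l)/2 ≤ 1 - α := by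
    rcases le_total l (1/4) with hc | hc
    · have hmeq : m = 1/4 := max_eq_right (by linarith)
      have hαeq : α = 1/2 := by
        rw [hαdef, hmdef, show max l (1/4) = (1/4:ℝ) from hmeq,
          show (1/4:ℝ) = (1/2)^2 by norm_num, Real.sqrt_sq (by norm_num : (0:ℝ) ≤ 1/2)]
      rw [hαeq]
      linarith
    · have hmeq : m = l := max_eq_left (by linarith)
      have hl_eq : α^2 = l := by rw [hα2, hmeq]
      nlinarith [sq_nonneg (1 - α), hα0]
  have h1α : (0:ℝ) < 1 - α := by linarith
  have h1l : (0:ℝ) < 1 - l := by linarith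
  have htail' : ∀ x : ℝ, 0 ≤ x → μ (Set.Ici (x + h)) ≤ ENNReal.ofReal m * μ (Set.Ici x) :=
    fun x hx => (htail x hx).trans (mul_le_mul_left (ENNReal.ofReal_le_ofReal hm_l) _)
  have hpt : ∀ x : ℝ, ENNReal.ofReal ((Real.exp (f x / 2) - Real.exp (-(f x) / 2)) ^ 2) ≤
      ENNReal.ofReal ((1-α)⁻¹) * ∑' k : ℕ, ENNReal.ofReal ((α⁻¹)^k * ψ (x - k*h)) := by
    intro x
    have hreal := pointwise_bound f hmono hpos hzero hh hα0 hα1 x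
    have hnn : ∀ k ∈ Finset.range ⌈x/h⌉₊, (0:ℝ) ≤
        (α⁻¹)^k * (Real.exp (f (x - k*h)) * (f (x - k*h) - f (x - k*h - h))^2) :=
      fun k _ => by positivity
    calc ENNReal.ofReal ((Real.exp (f x / 2) - Real.exp (-(f x) / 2)) ^ 2)
        ≤ ENNReal.ofReal ((1-α)⁻¹ * ∑ k ∈ Finset.range ⌈x/h⌉₊,
            (α⁻¹)^k * (Real.exp (f (x - k*h)) * (f (x - k*h) - f (x - k*h - h))^2)) :=
          ENNReal.ofReal_le_ofReal hreal
      _ = ENNReal.ofReal ((1-α)⁻¹) * ENNReal.ofReal (∑ k ∈ Finset.range ⌈x/h⌉₊,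
            (α⁻¹)^k * (Real.exp (f (x - k*h)) * (f (x - k*h) - f (x - k*h - h))^2)) :=
          ENNReal.ofReal_mul (by positivity)
      _ = ENNReal.ofReal ((1-α)⁻¹) * ∑ k ∈ Finset.range ⌈x/h⌉₊, ENNReal.ofReal
            ((α⁻¹)^k * (Real.exp (f (x - k*h)) * (f (x - k*h) - f (x - k*h - h))^2)) := by
          rw [ENNReal.ofReal_sum_of_nonneg hnn]
      _ = ENNReal.ofReal ((1-α)⁻¹) * ∑ k ∈ Finset.range ⌈x/h⌉₊, ENNReal.ofReal
            ((α⁻¹)^k * ψ (x - k*h)) := by simp only [hψdef]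
      _ ≤ ENNReal.ofReal ((1-α)⁻¹) * ∑' k : ℕ, ENNReal.ofReal ((α⁻¹)^k * ψ (x - k*h)) :=
          mul_le_mul_right (ENNReal.sum_le_tsum _) _
  have hmeasT : ∀ k : ℕ, Measurable (fun x : ℝ => ENNReal.ofReal ((α⁻¹)^k * ψ (x - k*h))) := by
    intro k
    exact ENNReal.measurable_ofReal.comp
      (measurable_const.mul (hψ_meas.comp (measurable_id.sub_const _)))
  calc ∫⁻ x, ENNReal.ofReal ((Real.exp (f x / 2) - Real.exp (-(f x) / 2)) ^ 2) ∂μ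
      ≤ ∫⁻ x, ENNReal.ofReal ((1-α)⁻¹) * ∑' k : ℕ, ENNReal.ofReal ((α⁻¹)^k * ψ (x - k*h)) ∂μ :=
        lintegral_mono hpt
    _ = ENNReal.ofReal ((1-α)⁻¹) * ∫⁻ x, ∑' k : ℕ, ENNReal.ofReal ((α⁻¹)^k * ψ (x - k*h)) ∂μ :=
        lintegral_const_mul' _ _ ENNReal.ofReal_ne_top
    _ = ENNReal.ofReal ((1-α)⁻¹) *
          ∑' k : ℕ, ∫⁻ x, ENNReal.ofReal ((α⁻¹)^k * ψ (x - k*h)) ∂μ := by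
        rw [lintegral_tsum (fun k => (hmeasT k).aemeasurable)]
    _ ≤ ENNReal.ofReal ((1-α)⁻¹) *
          ∑' k : ℕ, (ENNReal.ofReal α)^k * ∫⁻ x, ENNReal.ofReal (ψ x) ∂μ := by
        apply mul_le_mul_right
        apply ENNReal.tsum_le_tsum
        intro k
        calc ∫⁻ x, ENNReal.ofReal ((α⁻¹)^k * ψ (x - k*h)) ∂μ
            = ENNReal.ofReal ((α⁻¹)^k) * ∫⁻ x, ENNReal.ofReal (ψ (x - k*h)) ∂μ := by
              simp_rw [ENNReal.ofReal_mul (pow_nonneg (inv_nonneg.2 hα0.le) k)]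
              rw [lintegral_const_mul' _ _ ENNReal.ofReal_ne_top]
          _ ≤ ENNReal.ofReal ((α⁻¹)^k) *
                ((ENNReal.ofReal m)^k * ∫⁻ x, ENNReal.ofReal (ψ x) ∂μ) :=
              mul_le_mul_right (lemAiter hh htail' ψ hψ_mono hψ_zero k) _
          _ = (ENNReal.ofReal α)^k * ∫⁻ x, ENNReal.ofReal (ψ x) ∂μ := by
              rw [ENNReal.ofReal_pow (inv_nonneg.2 hα0.le), ← mul_assoc, ← mul_pow,
                  ← ENNReal.ofReal_mul (inv_nonneg.2 hα0.le)]
              congr 3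
              rw [← hα2, sq, inv_mul_cancel_left₀ hα0.ne']
    _ = ENNReal.ofReal ((1-α)⁻¹) *
          ((1 - ENNReal.ofReal α)⁻¹ * ∫⁻ x, ENNReal.ofReal (ψ x) ∂μ) := by
        rw [ENNReal.tsum_mul_right, ENNReal.tsum_geometric]
    _ = ENNReal.ofReal (((1-α)⁻¹)^2) * ∫⁻ x, ENNReal.ofReal (ψ x) ∂μ := by
        have e1 : (1 : ENNReal) - ENNReal.ofReal α = ENNReal.ofReal (1-α) := by
          rw [ENNReal.ofReal_sub _ hα0.le, ENNReal.ofReal_one]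
        rw [e1, ← ENNReal.ofReal_inv_of_pos h1α, ← mul_assoc,
            ← ENNReal.ofReal_mul (by positivity), sq]
    _ ≤ ENNReal.ofReal (4 / (1-l)^2) * ∫⁻ x, ENNReal.ofReal (ψ x) ∂μ := by
        apply mul_le_mul_left
        apply ENNReal.ofReal_le_ofReal
        have h1 : (1-α)⁻¹ ≤ 2 / (1-l) := by
          rw [show (2:ℝ)/(1-l) = ((1-l)/2)⁻¹ by field_simp]
          exact inv_anti₀ (by linarith) hkey
        calc ((1-α)⁻¹)^2 ≤ (2/(1-l))^2 := pow_le_pow_left₀ (by positivity) h1 2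
          _ = 4/(1-l)^2 := by rw [div_pow]; norm_num
    _ = ENNReal.ofReal (4 / (1-l)^2) *
          ∫⁻ x, ENNReal.ofReal (Real.exp (f x) * (f x - f (x - h)) ^ 2) ∂μ := rfl
end

section
/- Let μ be a symmetric Borel probability measure on ℝ with μ[x+h,∞) ≤ λ·μ[x,∞) for all x ≥ 0. Let f: ℝ → ℝ be convex with f(0)=0, with minimum attained at x₀ (x₀ = ∓∞ if f is monotone). Define Df(x) = f(x)−f(x−h) for x > x₀+h, Df(x) = f(x)−f(x₀) for x ∈ [x₀−h, x₀+h], and Df(x) = f(x)−f(x+h) for x < x₀−h. Then ∫(e^{f/2} − e^{−f/2})² dμ ≤ (8/(1−λ)²)·∫ e^{f(x)}(Df(x))² dμ(x). -/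
/-!
Write `2 sinh (t / 2) = e^{t/2} - e^{-t/2}`, an odd increasing function. Since the convex function
`f` is monotone on either side of its minimiser, `f x - f y ≤ Df x` whenever `|x - y| ≤ h`.

Convexity and `f 0 = 0` give `f x + f (-x) ≥ 0`, so by the symmetry of `μ` the left-hand side is at
most twice the same integral with `f` replaced by `f⁺ = max f 0`. On `[0, ∞)` the function
`s = 2 sinh (f⁺ / 2)` is monotone, vanishes at `0`, and its increments over steps of length `h` are
at most `e^{f/2} Df`. For such an `s`, the superlevel sets are half-lines, so the tail condition and
the layer-cake formula give `∫ s(x - h)² dμ ≤ λ ∫ s² dμ`; the pointwise bound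
`s² ≤ s(· - h)² + ε s² + ε⁻¹ (e^{f/2} Df)²` with `ε = (1 - λ)/2` then absorbs into
`∫ s² dμ ≤ 4/(1 - λ)² ∫_{x > 0} e^f Df² dμ`. Reflecting handles `(-∞, 0]`.
-/

open MeasureTheory Set Real Filter Topology
open scoped ENNReal

lemma exp_half_sub_exp_neg_half (t : ℝ) : exp (t / 2) - exp (-t / 2) = 2 * sinh (t / 2) := by
  rw [sinh_eq, neg_div]; ring

lemma two_mul_sinh_half_sub_le {a b : ℝ} (hb : 0 ≤ b) (hba : b ≤ a) :
    2 * sinh (a / 2) - 2 * sinh (b / 2) ≤ (a - b) * exp (a / 2) := by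
  rw [← exp_half_sub_exp_neg_half, ← exp_half_sub_exp_neg_half]
  have hgap : (b - a) / 2 + 1 ≤ exp ((b - a) / 2) := add_one_le_exp _
  have hb' : exp (b / 2) = exp (a / 2) * exp ((b - a) / 2) := by rw [← exp_add]; ring_nf
  have ha' : exp (-a / 2) = exp (-b / 2) * exp ((b - a) / 2) := by rw [← exp_add]; ring_nf
  have hexp_b : exp (-b / 2) ≤ exp (a / 2) := exp_le_exp.2 (by linarith)
  nlinarith [exp_pos (a / 2), exp_pos (-b / 2)]

lemma sq_two_mul_sinh_half_le_of_add_nonneg {a b : ℝ} (hab : 0 ≤ a + b) :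
    (2 * sinh (a / 2)) ^ 2 ≤ (2 * sinh (max a 0 / 2)) ^ 2 + (2 * sinh (max b 0 / 2)) ^ 2 := by
  rcases le_total 0 a with ha | ha
  · rw [max_eq_left ha]
    exact le_add_of_nonneg_right (sq_nonneg _)
  · rw [max_eq_right ha, max_eq_left (by linarith : 0 ≤ b), ← neg_sq, ← mul_neg, ← sinh_neg,
      ← neg_div]
    refine le_add_of_nonneg_of_le (sq_nonneg _) (pow_le_pow_left₀ ?_ ?_ 2)
    · exact mul_nonneg zero_le_two (sinh_nonneg_iff.2 (by linarith))
    · exact mul_le_mul_of_nonneg_left (sinh_le_sinh.2 (by linarith)) zero_le_two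

lemma sq_le_sq_add_of_sub_le {a b w ε : ℝ} (hb : 0 ≤ b) (hba : b ≤ a) (hw : a - b ≤ w)
    (hε : 0 < ε) : a ^ 2 ≤ b ^ 2 + ε * a ^ 2 + ε⁻¹ * w ^ 2 := by
  have hεinv : ε * ε⁻¹ = 1 := mul_inv_cancel₀ hε.ne'
  have hamgm : 2 * a * w ≤ ε * a ^ 2 + ε⁻¹ * w ^ 2 := by
    nlinarith [mul_nonneg (inv_pos.2 hε).le (sq_nonneg (ε * a - w))]
  nlinarith

lemma min_sub_min_le_sub {a b c : ℝ} (hba : b ≤ a) : min a c - min b c ≤ a - b := by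
  simp only [min_def]; split_ifs <;> linarith

lemma ENNReal.le_ofReal_div_mul_of_le {A B : ℝ≥0∞} {q c : ℝ} (hq0 : 0 ≤ q) (hq1 : q < 1)
    (hc : 0 < c) (hA : A ≠ ⊤) (h : A ≤ ENNReal.ofReal q * A + ENNReal.ofReal c * B) :
    A ≤ ENNReal.ofReal (c / (1 - q)) * B := by
  rcases eq_or_ne B ⊤ with rfl | hB
  · rw [ENNReal.mul_top (ENNReal.ofReal_pos.2 (div_pos hc (sub_pos.2 hq1))).ne']
    exact le_top
  rw [← ENNReal.ofReal_toReal hA, ← ENNReal.ofReal_toReal hB] at h ⊢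
  set a := A.toReal
  set b := B.toReal
  have ha : 0 ≤ a := ENNReal.toReal_nonneg
  have hb : 0 ≤ b := ENNReal.toReal_nonneg
  rw [← ENNReal.ofReal_mul hq0, ← ENNReal.ofReal_mul hc.le, ← ENNReal.ofReal_add (by positivity)
    (by positivity), ENNReal.ofReal_le_ofReal_iff (by positivity)] at h
  rw [← ENNReal.ofReal_mul (div_pos hc (sub_pos.2 hq1)).le]
  refine ENNReal.ofReal_le_ofReal ?_
  rw [div_mul_eq_mul_div, le_div_iff₀ (sub_pos.2 hq1)]
  linarith

lemma nonneg_of_monotone_of_eq_zero {s : ℝ → ℝ} (hs : Monotone s) (hs0 : ∀ x ≤ 0, s x = 0)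
    (x : ℝ) : 0 ≤ s x := by
  rcases le_total x 0 with hx | hx
  · exact (hs0 x hx).ge
  · exact (hs0 0 le_rfl).ge.trans (hs hx)

lemma ConvexOn.monotoneOn_max_zero {f : ℝ → ℝ} (hf : ConvexOn ℝ univ f) (hf0 : f 0 = 0) :
    MonotoneOn (fun x => max (f x) 0) (Ici 0) := by
  intro u (hu : 0 ≤ u) v _ huv
  rcases le_or_gt (f u) 0 with hfu | hfu
  · simp only [max_eq_right hfu, le_max_right]
  · have hu0 : 0 < u := lt_of_le_of_ne hu (by rintro rfl; linarith)
    exact max_le_max_right 0 <|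
      hf.le_right_of_left_le'' (mem_univ 0) (mem_univ v) hu0 huv (by linarith)

lemma ConvexOn.comp_neg_univ {f : ℝ → ℝ} (hf : ConvexOn ℝ univ f) :
    ConvexOn ℝ univ fun x => f (-x) := by
  refine ⟨convex_univ, fun x _ y _ a b ha hb hab => ?_⟩
  convert hf.2 (mem_univ (-x)) (mem_univ (-y)) ha hb hab using 2
  simp only [smul_eq_mul]; ring

lemma ConvexOn.add_comp_neg_nonneg {f : ℝ → ℝ} (hf : ConvexOn ℝ univ f) (hf0 : f 0 = 0)
    (x : ℝ) : 0 ≤ f x + f (-x) := by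
  have := hf.2 (mem_univ x) (mem_univ (-x)) (by norm_num : (0 : ℝ) ≤ 1 / 2)
    (by norm_num : (0 : ℝ) ≤ 1 / 2) (by norm_num)
  simp only [smul_eq_mul, mul_neg, add_neg_cancel, hf0] at this
  linarith

lemma ConvexOn.sub_le_of_discreteGrad {f Df : ℝ → ℝ} {h x₀ : ℝ} (hf : ConvexOn ℝ univ f)
    (hmin : ∀ x, f x₀ ≤ f x)
    (hDf1 : ∀ x, x₀ + h < x → Df x = f x - f (x - h))
    (hDf2 : ∀ x, x₀ - h ≤ x → x ≤ x₀ + h → Df x = f x - f x₀)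
    (hDf3 : ∀ x, x < x₀ - h → Df x = f x - f (x + h))
    {x y : ℝ} (hy : y ∈ Icc (x - h) (x + h)) : f x - f y ≤ Df x := by
  by_cases hx1 : x₀ + h < x
  · rw [hDf1 x hx1]
    have := hf.le_right_of_left_le'' (mem_univ x₀) (mem_univ y) (by linarith) hy.1 (hmin _)
    linarith
  by_cases hx3 : x < x₀ - h
  · rw [hDf3 x hx3]
    have := hf.le_left_of_right_le'' (mem_univ y) (mem_univ x₀) hy.2 (by linarith) (hmin _)
    linarith
  rw [hDf2 x (by linarith) (by linarith)]
  linarith [hmin y]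

section

variable {μ : Measure ℝ} {h l : ℝ}

lemma measure_Ioi_add_le_of_tail
    (htail : ∀ x : ℝ, 0 ≤ x → μ (Ici (x + h)) ≤ ENNReal.ofReal l * μ (Ici x))
    {c : ℝ} (hc : 0 ≤ c) : μ (Ioi (c + h)) ≤ ENNReal.ofReal l * μ (Ioi c) := by
  set u : ℕ → ℝ := fun n => c + 1 / (n + 1)
  have hu_pos : ∀ n, c < u n := fun n => lt_add_of_pos_right c Nat.one_div_pos_of_nat
  have hu_anti : Antitone u := fun m n hmn => by
    simp only [u]; gcongr
  have hu_lim : Tendsto u atTop (𝓝 c) := by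
    simpa [u] using tendsto_one_div_add_atTop_nhds_zero_nat.const_add c
  have hunion : ⋃ n, Ici (u n + h) = Ioi (c + h) :=
    iUnion_Ici_eq_Ioi_of_lt_of_tendsto (fun n => by linarith [hu_pos n])
      (hu_lim.add_const h)
  rw [← hunion, Monotone.measure_iUnion fun m n hmn => Ici_subset_Ici.2 (by linarith [hu_anti hmn])]
  refine iSup_le fun n => (htail (u n) (hc.trans (hu_pos n).le)).trans ?_
  exact mul_le_mul_right (measure_mono (Ici_subset_Ioi.2 (hu_pos n))) _

lemma measure_preimage_sub_le_of_isUpperSet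
    (htail : ∀ x : ℝ, 0 ≤ x → μ (Ici (x + h)) ≤ ENNReal.ofReal l * μ (Ici x))
    {U : Set ℝ} (hU : IsUpperSet U) (hU0 : U ⊆ Ici 0) :
    μ ((fun a => a - h) ⁻¹' U) ≤ ENNReal.ofReal l * μ U := by
  rcases U.eq_empty_or_nonempty with rfl | hne
  · simp
  have hbdd : BddBelow U := ⟨0, fun a ha => hU0 ha⟩
  set c := sInf U
  have hc : 0 ≤ c := le_csInf hne fun a ha => hU0 ha
  by_cases hcU : c ∈ U
  · have hUc : U = Ici c := Subset.antisymm (fun a ha => csInf_le hbdd ha) (hU.Ici_subset hcU)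
    have hpre : (fun a => a - h) ⁻¹' U = Ici (c + h) := by
      ext a; simp [hUc]
    rw [hpre, hUc]
    exact htail c hc
  · have hUc : U = Ioi c := by
      refine Subset.antisymm (fun a ha => lt_of_le_of_ne (csInf_le hbdd ha) ?_) fun a ha => ?_
      · rintro rfl; exact hcU ha
      · obtain ⟨b, hb, hba⟩ := exists_lt_of_csInf_lt hne ha
        exact hU hba.le hb
    have hpre : (fun a => a - h) ⁻¹' U = Ioi (c + h) := by
      ext a; simp [hUc]
    rw [hpre, hUc]
    exact measure_Ioi_add_le_of_tail htail hc

lemma lintegral_comp_sub_le_of_tail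
    (htail : ∀ x : ℝ, 0 ≤ x → μ (Ici (x + h)) ≤ ENNReal.ofReal l * μ (Ici x))
    {ψ : ℝ → ℝ} (hψ : Monotone ψ) (hψ0 : ∀ x ≤ 0, ψ x = 0) :
    ∫⁻ x, ENNReal.ofReal (ψ (x - h)) ∂μ ≤ ENNReal.ofReal l * ∫⁻ x, ENNReal.ofReal (ψ x) ∂μ := by
  have hψnn := nonneg_of_monotone_of_eq_zero hψ hψ0
  have hψh : Monotone fun x => ψ (x - h) := fun a b hab => hψ (by linarith)
  rw [lintegral_eq_lintegral_meas_lt μ (.of_forall fun x => hψnn _) hψh.measurable.aemeasurable,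
    lintegral_eq_lintegral_meas_lt μ (.of_forall hψnn) hψ.measurable.aemeasurable,
    ← lintegral_const_mul' _ _ ENNReal.ofReal_ne_top]
  refine setLIntegral_mono' measurableSet_Ioi fun t (ht : 0 < t) => ?_
  refine measure_preimage_sub_le_of_isUpperSet htail (fun a b hab ha => ?_) fun a ha => ?_
  · exact lt_of_lt_of_le ha (hψ hab)
  · change t < ψ a at ha
    exact mem_Ici.2 (not_lt.1 fun ha0 => by linarith [hψ0 a ha0.le])

lemma lintegral_sq_le_add_of_sub_le
    (htail : ∀ x : ℝ, 0 ≤ x → μ (Ici (x + h)) ≤ ENNReal.ofReal l * μ (Ici x))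
    (hl0 : 0 ≤ l) (hh : 0 ≤ h) {s w : ℝ → ℝ} (hs : Monotone s) (hs0 : ∀ x ≤ 0, s x = 0)
    (hinc : ∀ x, 0 < x → s x - s (x - h) ≤ w x) {ε : ℝ} (hε : 0 < ε) :
    ∫⁻ x, ENNReal.ofReal (s x ^ 2) ∂μ ≤
      ENNReal.ofReal (l + ε) * ∫⁻ x, ENNReal.ofReal (s x ^ 2) ∂μ +
        ENNReal.ofReal ε⁻¹ * ∫⁻ x in Ioi 0, ENNReal.ofReal (w x ^ 2) ∂μ := by
  have hsq : Monotone fun x => s x ^ 2 := fun a b hab =>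
    pow_le_pow_left₀ (nonneg_of_monotone_of_eq_zero hs hs0 a) (hs hab) 2
  have hm : Measurable fun x => ENNReal.ofReal (s x ^ 2) :=
    ENNReal.measurable_ofReal.comp hsq.measurable
  have hm_sub : Measurable fun x => ENNReal.ofReal (s (x - h) ^ 2) :=
    hm.comp (measurable_sub_const h)
  have hpt : ∀ x, ENNReal.ofReal (s x ^ 2) ≤ ENNReal.ofReal (s (x - h) ^ 2) +
      ENNReal.ofReal ε * ENNReal.ofReal (s x ^ 2) +
      ENNReal.ofReal ε⁻¹ * (Ioi 0).indicator (fun x => ENNReal.ofReal (w x ^ 2)) x := by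
    intro x
    rcases le_or_gt x 0 with hx | hx
    · simp [hs0 x hx]
    rw [indicator_of_mem (show x ∈ Ioi 0 from hx), ← ENNReal.ofReal_mul hε.le,
      ← ENNReal.ofReal_mul (inv_pos.2 hε).le, ← ENNReal.ofReal_add (by positivity) (by positivity),
      ← ENNReal.ofReal_add (by positivity) (by positivity)]
    exact ENNReal.ofReal_le_ofReal <| sq_le_sq_add_of_sub_le
      (nonneg_of_monotone_of_eq_zero hs hs0 _) (hs (by linarith)) (hinc x hx) hε
  calc ∫⁻ x, ENNReal.ofReal (s x ^ 2) ∂μ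
      ≤ ∫⁻ x, (ENNReal.ofReal (s (x - h) ^ 2) + ENNReal.ofReal ε * ENNReal.ofReal (s x ^ 2) +
          ENNReal.ofReal ε⁻¹ * (Ioi 0).indicator (fun x => ENNReal.ofReal (w x ^ 2)) x) ∂μ :=
        lintegral_mono hpt
    _ = ∫⁻ x, ENNReal.ofReal (s (x - h) ^ 2) ∂μ +
          ENNReal.ofReal ε * ∫⁻ x, ENNReal.ofReal (s x ^ 2) ∂μ +
          ENNReal.ofReal ε⁻¹ * ∫⁻ x in Ioi 0, ENNReal.ofReal (w x ^ 2) ∂μ := by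
        rw [lintegral_add_left (by fun_prop), lintegral_add_left hm_sub, lintegral_const_mul _ hm,
          lintegral_const_mul' _ _ ENNReal.ofReal_ne_top, lintegral_indicator measurableSet_Ioi]
    _ ≤ ENNReal.ofReal l * ∫⁻ x, ENNReal.ofReal (s x ^ 2) ∂μ +
          ENNReal.ofReal ε * ∫⁻ x, ENNReal.ofReal (s x ^ 2) ∂μ +
          ENNReal.ofReal ε⁻¹ * ∫⁻ x in Ioi 0, ENNReal.ofReal (w x ^ 2) ∂μ := by
        gcongr
        exact lintegral_comp_sub_le_of_tail htail hsq fun x hx => by simp [hs0 x hx]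
    _ = _ := by rw [ENNReal.ofReal_add hl0 hε.le, add_mul]

lemma lintegral_sq_le_of_sub_le_of_ne_top
    (htail : ∀ x : ℝ, 0 ≤ x → μ (Ici (x + h)) ≤ ENNReal.ofReal l * μ (Ici x))
    (hl0 : 0 ≤ l) (hl1 : l < 1) (hh : 0 ≤ h) {s w : ℝ → ℝ} (hs : Monotone s)
    (hs0 : ∀ x ≤ 0, s x = 0) (hinc : ∀ x, 0 < x → s x - s (x - h) ≤ w x)
    (hfin : ∫⁻ x, ENNReal.ofReal (s x ^ 2) ∂μ ≠ ⊤) :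
    ∫⁻ x, ENNReal.ofReal (s x ^ 2) ∂μ ≤
      ENNReal.ofReal (4 / (1 - l) ^ 2) * ∫⁻ x in Ioi 0, ENNReal.ofReal (w x ^ 2) ∂μ := by
  have hε : 0 < (1 - l) / 2 := by linarith
  convert ENNReal.le_ofReal_div_mul_of_le (by positivity) (by linarith) (inv_pos.2 hε) hfin
    (lintegral_sq_le_add_of_sub_le htail hl0 hh hs hs0 hinc hε) using 3
  field_simp
  ring

lemma lintegral_sq_le_of_sub_le [IsFiniteMeasure μ]
    (htail : ∀ x : ℝ, 0 ≤ x → μ (Ici (x + h)) ≤ ENNReal.ofReal l * μ (Ici x))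
    (hl0 : 0 ≤ l) (hl1 : l < 1) (hh : 0 ≤ h) {s w : ℝ → ℝ} (hs : Monotone s)
    (hs0 : ∀ x ≤ 0, s x = 0) (hinc : ∀ x, 0 < x → s x - s (x - h) ≤ w x) :
    ∫⁻ x, ENNReal.ofReal (s x ^ 2) ∂μ ≤
      ENNReal.ofReal (4 / (1 - l) ^ 2) * ∫⁻ x in Ioi 0, ENNReal.ofReal (w x ^ 2) ∂μ := by
  -- Truncation makes `∫ s²` finite, so that it can be absorbed.
  set t : ℕ → ℝ → ℝ := fun n x => min (s x) n
  have ht_mono : ∀ n, Monotone (t n) := fun n a b hab => min_le_min_right _ (hs hab)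
  have ht_nn : ∀ n x, 0 ≤ t n x := fun n x =>
    le_min (nonneg_of_monotone_of_eq_zero hs hs0 x) n.cast_nonneg
  have ht_bound : ∀ n : ℕ, ∫⁻ x, ENNReal.ofReal (t n x ^ 2) ∂μ ≤
      ENNReal.ofReal (4 / (1 - l) ^ 2) * ∫⁻ x in Ioi 0, ENNReal.ofReal (w x ^ 2) ∂μ := by
    intro n
    refine lintegral_sq_le_of_sub_le_of_ne_top htail hl0 hl1 hh (ht_mono n)
      (fun x hx => by simp [t, hs0 x hx]) (fun x hx => ?_) ?_
    · exact (min_sub_min_le_sub (hs (by linarith))).trans (hinc x hx)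
    · refine ne_top_of_le_ne_top
        (lintegral_const_lt_top (ENNReal.ofReal_ne_top (r := (n : ℝ) ^ 2))).ne
        (lintegral_mono fun x => ENNReal.ofReal_le_ofReal ?_)
      exact pow_le_pow_left₀ (ht_nn n x) (min_le_right _ _) 2
  have hsup : ∀ x, ENNReal.ofReal (s x ^ 2) ≤ ⨆ n : ℕ, ENNReal.ofReal (t n x ^ 2) := fun x => by
    obtain ⟨n, hn⟩ := exists_nat_ge (s x)
    exact le_iSup_of_le n (by simp [t, min_eq_left hn])
  calc ∫⁻ x, ENNReal.ofReal (s x ^ 2) ∂μ ≤ ∫⁻ x, ⨆ n : ℕ, ENNReal.ofReal (t n x ^ 2) ∂μ :=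
        lintegral_mono hsup
    _ = ⨆ n : ℕ, ∫⁻ x, ENNReal.ofReal (t n x ^ 2) ∂μ := by
        refine lintegral_iSup (fun n => ?_) fun m n hmn x => ?_
        · exact ENNReal.measurable_ofReal.comp ((ht_mono n).measurable.pow_const 2)
        · exact ENNReal.ofReal_le_ofReal (pow_le_pow_left₀ (ht_nn m x)
            (min_le_min_left _ (Nat.cast_le.2 hmn)) 2)
    _ ≤ _ := iSup_le ht_bound

lemma lintegral_Ici_sq_sinh_posPart_le [IsFiniteMeasure μ]
    (htail : ∀ x : ℝ, 0 ≤ x → μ (Ici (x + h)) ≤ ENNReal.ofReal l * μ (Ici x))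
    (hl0 : 0 ≤ l) (hl1 : l < 1) (hh : 0 ≤ h) {f D : ℝ → ℝ} (hf : ConvexOn ℝ univ f)
    (hf0 : f 0 = 0) (hD : ∀ x, 0 < x → ∀ y ∈ Icc (x - h) x, f x - f y ≤ D x) :
    ∫⁻ x in Ici 0, ENNReal.ofReal ((2 * sinh (max (f x) 0 / 2)) ^ 2) ∂μ ≤
      ENNReal.ofReal (4 / (1 - l) ^ 2) *
        ∫⁻ x in Ioi 0, ENNReal.ofReal (exp (f x) * D x ^ 2) ∂μ := by
  have hpos := hf.monotoneOn_max_zero hf0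
  set s : ℝ → ℝ := fun x => 2 * sinh (max (f (max x 0)) 0 / 2)
  have hs : Monotone s := fun a b hab =>
    mul_le_mul_of_nonneg_left (sinh_le_sinh.2 (div_le_div_of_nonneg_right
      (hpos (mem_Ici.2 (le_max_right _ _)) (mem_Ici.2 (le_max_right _ _))
        (max_le_max_right 0 hab)) zero_le_two))
      zero_le_two
  have hinc : ∀ x, 0 < x → s x - s (x - h) ≤ exp (f x / 2) * D x := by
    intro x hx
    set y := max (x - h) 0
    have hy : y ∈ Icc (x - h) x := ⟨le_max_left _ _, max_le (by linarith) hx.le⟩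
    have hyx : max (f y) 0 ≤ max (f x) 0 := hpos (mem_Ici.2 (le_max_right _ _)) hx.le hy.2
    have hD0 : 0 ≤ D x := by simpa using hD x hx x ⟨by linarith, le_rfl⟩
    have hkey := two_mul_sinh_half_sub_le (le_max_right _ _) hyx
    have hsx : s x = 2 * sinh (max (f x) 0 / 2) := by simp only [s, max_eq_left hx.le]
    rw [hsx, show s (x - h) = 2 * sinh (max (f y) 0 / 2) from rfl]
    rcases le_or_gt (f x) 0 with hfx | hfx
    · rw [max_eq_right hfx] at hkey ⊢
      linarith [mul_nonneg (exp_pos (f x / 2)).le hD0,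
        mul_nonneg (le_max_right (f y) 0) (exp_pos (0 / 2)).le]
    · rw [max_eq_left hfx.le] at hkey ⊢
      calc _ ≤ (f x - max (f y) 0) * exp (f x / 2) := hkey
        _ ≤ D x * exp (f x / 2) := by
            gcongr
            linarith [hD x hx y hy, le_max_left (f y) 0]
        _ = exp (f x / 2) * D x := mul_comm _ _
  calc ∫⁻ x in Ici 0, ENNReal.ofReal ((2 * sinh (max (f x) 0 / 2)) ^ 2) ∂μ
      = ∫⁻ x in Ici 0, ENNReal.ofReal (s x ^ 2) ∂μ :=
        setLIntegral_congr_fun measurableSet_Ici fun x (hx : 0 ≤ x) => by simp [s, max_eq_left hx]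
    _ ≤ ∫⁻ x, ENNReal.ofReal (s x ^ 2) ∂μ := setLIntegral_le_lintegral _ _
    _ ≤ ENNReal.ofReal (4 / (1 - l) ^ 2) *
          ∫⁻ x in Ioi 0, ENNReal.ofReal ((exp (f x / 2) * D x) ^ 2) ∂μ :=
        lintegral_sq_le_of_sub_le htail hl0 hl1 hh hs
          (fun x hx => by simp [s, max_eq_right hx, hf0]) hinc
    _ = _ := by
        congr 2 with x
        rw [mul_pow, ← exp_nat_mul]
        ring_nf

lemma setLIntegral_preimage_neg_comp_neg (hsym : μ.map (fun x => -x) = μ)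
    (φ : ℝ → ℝ≥0∞) (s : Set ℝ) :
    ∫⁻ x in (fun x => -x) ⁻¹' s, φ (-x) ∂μ = ∫⁻ x in s, φ x ∂μ :=
  MeasurePreserving.setLIntegral_comp_preimage_emb ⟨measurable_neg, hsym⟩
    measurableEmbedding_neg φ s

lemma lintegral_sq_sinh_posPart_le [IsFiniteMeasure μ] (hsym : μ.map (fun x => -x) = μ)
    (htail : ∀ x : ℝ, 0 ≤ x → μ (Ici (x + h)) ≤ ENNReal.ofReal l * μ (Ici x))
    (hl0 : 0 ≤ l) (hl1 : l < 1) (hh : 0 ≤ h) {f D : ℝ → ℝ} (hf : ConvexOn ℝ univ f)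
    (hf0 : f 0 = 0) (hD : ∀ x, ∀ y ∈ Icc (x - h) (x + h), f x - f y ≤ D x) :
    ∫⁻ x, ENNReal.ofReal ((2 * sinh (max (f x) 0 / 2)) ^ 2) ∂μ ≤
      ENNReal.ofReal (4 / (1 - l) ^ 2) * ∫⁻ x, ENNReal.ofReal (exp (f x) * D x ^ 2) ∂μ := by
  set φ : ℝ → ℝ≥0∞ := fun x => ENNReal.ofReal ((2 * sinh (max (f x) 0 / 2)) ^ 2)
  set ρ : ℝ → ℝ≥0∞ := fun x => ENNReal.ofReal (exp (f x) * D x ^ 2)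
  have hright : ∫⁻ x in Ici 0, φ x ∂μ ≤ ENNReal.ofReal (4 / (1 - l) ^ 2) * ∫⁻ x in Ioi 0, ρ x ∂μ :=
    lintegral_Ici_sq_sinh_posPart_le htail hl0 hl1 hh hf hf0 fun x _ y hy =>
      hD x y ⟨hy.1, by linarith [hy.2]⟩
  have hleft :
      ∫⁻ x in Iic 0, φ x ∂μ ≤ ENNReal.ofReal (4 / (1 - l) ^ 2) * ∫⁻ x in Iio 0, ρ x ∂μ := by
    have := lintegral_Ici_sq_sinh_posPart_le htail hl0 hl1 hh hf.comp_neg_univ (by simpa using hf0)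
      (D := fun x => D (-x)) fun x _ y hy => hD (-x) (-y) ⟨by linarith [hy.2], by linarith [hy.1]⟩
    have hIci : Ici (0 : ℝ) = (fun x => -x) ⁻¹' Iic 0 := by ext; simp
    have hIoi : Ioi (0 : ℝ) = (fun x => -x) ⁻¹' Iio 0 := by ext; simp
    rwa [hIci, hIoi, setLIntegral_preimage_neg_comp_neg hsym φ,
      setLIntegral_preimage_neg_comp_neg hsym ρ] at this
  calc ∫⁻ x, φ x ∂μ = ∫⁻ x in Ioi 0, φ x ∂μ + ∫⁻ x in Iic 0, φ x ∂μ := by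
        rw [← compl_Ioi, lintegral_add_compl _ measurableSet_Ioi]
    _ ≤ ∫⁻ x in Ici 0, φ x ∂μ + ∫⁻ x in Iic 0, φ x ∂μ := by
        gcongr ?_ + _; exact lintegral_mono_set Ioi_subset_Ici_self
    _ ≤ ENNReal.ofReal (4 / (1 - l) ^ 2) * (∫⁻ x in Ioi 0, ρ x ∂μ + ∫⁻ x in Iio 0, ρ x ∂μ) := by
        rw [mul_add]; exact add_le_add hright hleft
    _ ≤ ENNReal.ofReal (4 / (1 - l) ^ 2) * (∫⁻ x in Ioi 0, ρ x ∂μ + ∫⁻ x in Iic 0, ρ x ∂μ) := by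
        gcongr _ * (_ + ?_); exact lintegral_mono_set Iio_subset_Iic_self
    _ = ENNReal.ofReal (4 / (1 - l) ^ 2) * ∫⁻ x, ρ x ∂μ := by
        rw [← compl_Ioi, lintegral_add_compl _ measurableSet_Ioi]

lemma lintegral_sq_sinh_le_two_mul_posPart (hsym : μ.map (fun x => -x) = μ) {f : ℝ → ℝ}
    (hf : ConvexOn ℝ univ f) (hf0 : f 0 = 0) :
    ∫⁻ x, ENNReal.ofReal ((2 * sinh (f x / 2)) ^ 2) ∂μ ≤
      2 * ∫⁻ x, ENNReal.ofReal ((2 * sinh (max (f x) 0 / 2)) ^ 2) ∂μ := by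
  set φ : ℝ → ℝ≥0∞ := fun x => ENNReal.ofReal ((2 * sinh (max (f x) 0 / 2)) ^ 2)
  have hfc : Continuous f := continuousOn_univ.1 (hf.continuousOn isOpen_univ)
  have hφ : Measurable φ := by fun_prop
  calc ∫⁻ x, ENNReal.ofReal ((2 * sinh (f x / 2)) ^ 2) ∂μ ≤ ∫⁻ x, (φ x + φ (-x)) ∂μ :=
        lintegral_mono fun x => by
          rw [← ENNReal.ofReal_add (sq_nonneg _) (sq_nonneg _)]
          exact ENNReal.ofReal_le_ofReal
            (sq_two_mul_sinh_half_le_of_add_nonneg (hf.add_comp_neg_nonneg hf0 x))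
    _ = 2 * ∫⁻ x, φ x ∂μ := by
        rw [lintegral_add_left hφ, MeasurePreserving.lintegral_comp_emb ⟨measurable_neg, hsym⟩
          measurableEmbedding_neg φ, two_mul]

end

theorem stmt3 (μ : Measure ℝ) [IsProbabilityMeasure μ]
    (h l : ℝ) (hh : 0 < h) (hl0 : 0 ≤ l) (hl1 : l < 1)
    (hsym : μ.map (fun x => -x) = μ)
    (htail : ∀ x : ℝ, 0 ≤ x → μ (Set.Ici (x + h)) ≤ ENNReal.ofReal l * μ (Set.Ici x))
    (f : ℝ → ℝ) (hconv : ConvexOn ℝ Set.univ f) (hf0 : f 0 = 0)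
    (x₀ : ℝ) (hmin : ∀ x, f x₀ ≤ f x)
    (Df : ℝ → ℝ)
    (hDf1 : ∀ x, x₀ + h < x → Df x = f x - f (x - h))
    (hDf2 : ∀ x, x₀ - h ≤ x → x ≤ x₀ + h → Df x = f x - f x₀)
    (hDf3 : ∀ x, x < x₀ - h → Df x = f x - f (x + h)) :
    ∫⁻ x, ENNReal.ofReal ((Real.exp (f x / 2) - Real.exp (-(f x) / 2)) ^ 2) ∂μ ≤
      ENNReal.ofReal (8 / (1 - l) ^ 2) *
        ∫⁻ x, ENNReal.ofReal (Real.exp (f x) * (Df x) ^ 2) ∂μ := by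
  have hD : ∀ x, ∀ y ∈ Icc (x - h) (x + h), f x - f y ≤ Df x := fun _ _ hy =>
    hconv.sub_le_of_discreteGrad hmin hDf1 hDf2 hDf3 hy
  simp_rw [exp_half_sub_exp_neg_half]
  calc _ ≤ 2 * ∫⁻ x, ENNReal.ofReal ((2 * sinh (max (f x) 0 / 2)) ^ 2) ∂μ :=
        lintegral_sq_sinh_le_two_mul_posPart hsym hconv hf0
    _ ≤ 2 * (ENNReal.ofReal (4 / (1 - l) ^ 2) * ∫⁻ x, ENNReal.ofReal (exp (f x) * Df x ^ 2) ∂μ) :=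
        by gcongr; exact lintegral_sq_sinh_posPart_le hsym htail hl0 hl1 hh.le hconv hf0 hD
    _ = _ := by
        rw [← mul_assoc, ← ENNReal.ofReal_ofNat 2, ← ENNReal.ofReal_mul zero_le_two]
        ring_nf
end

section
/- Let φ₀(x) = x²/2 for |x| ≤ 1 and φ₀(x) = |x| − 1/2 for |x| > 1, and for C₁, h > 0 set φ₁(x) = φ₀(x/h)/C₁. Let f: ℝ → ℝ be a convex function whose derivative (where defined) satisfies |f′| ≤ 1/(C₁h), and suppose f attains its minimum at x₀. For x ≥ x₀ + h, the infimum convolution (f □ φ₁)(x) = inf_y (f(y) + φ₁(x−y)) satisfies (f □ φ₁)(x) ≤ f(x) − (C₁/2)(f(x) − f(x−h))². -/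
/-!
Put `D = f x - f (x - h)` and test the infimum at `y = x - t` with `t = C₁ h D`. Since `x - h`
lies right of the minimiser, `D ≥ 0`, and the Lipschitz bound gives `C₁ D ≤ 1`, so `0 ≤ t ≤ h`.
Convexity on `[x - h, x]` then gives `f (x - t) ≤ f x - (t / h) D = f x - C₁ D²`, while `t / h`
lies in the quadratic region of `φ₀`, so `φ₁ t = C₁ D² / 2`.
-/

open Set

noncomputable def huber (x : ℝ) : ℝ := if |x| ≤ 1 then x ^ 2 / 2 else |x| - 1 / 2

lemma huber_nonneg (x : ℝ) : 0 ≤ huber x := by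
  unfold huber
  split_ifs with hx
  · positivity
  · linarith [not_le.1 hx]

lemma huber_of_abs_le_one {x : ℝ} (hx : |x| ≤ 1) : huber x = x ^ 2 / 2 := if_pos hx

lemma ConvexOn.monotoneOn_Ici_of_isMinOn {f : ℝ → ℝ} (hf : ConvexOn ℝ univ f) {x₀ : ℝ}
    (hmin : IsMinOn f univ x₀) : MonotoneOn f (Ici x₀) := by
  intro a hx₀a b _ hab
  rcases (mem_Ici.1 hx₀a).eq_or_lt with rfl | hx₀a
  · exact hmin (mem_univ b)
  · exact hf.le_right_of_left_le'' (mem_univ _) (mem_univ _) hx₀a hab (hmin (mem_univ a))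

lemma ConvexOn.apply_sub_le {f : ℝ → ℝ} (hf : ConvexOn ℝ univ f) {x h t : ℝ} (hh : 0 < h)
    (ht₀ : 0 ≤ t) (hth : t ≤ h) : f (x - t) ≤ f x - t / h * (f x - f (x - h)) := by
  have hpoint : (t / h) • (x - h) + (1 - t / h) • x = x - t := by
    simp only [smul_eq_mul]
    field_simp
    ring
  have := hf.2 (mem_univ (x - h)) (mem_univ x) (div_nonneg ht₀ hh.le)
    (sub_nonneg.2 ((div_le_one hh).2 hth)) (add_sub_cancel _ _)
  rw [hpoint, smul_eq_mul, smul_eq_mul] at this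
  linarith

theorem stmt5 (C₁ h : ℝ) (hC : 0 < C₁) (hh : 0 < h)
    (φ₀ : ℝ → ℝ)
    (hφ₀ : ∀ x : ℝ, φ₀ x = if |x| ≤ 1 then x ^ 2 / 2 else |x| - 1 / 2)
    (φ₁ : ℝ → ℝ) (hφ₁ : ∀ x, φ₁ x = φ₀ (x / h) / C₁)
    (f : ℝ → ℝ) (hconv : ConvexOn ℝ Set.univ f)
    (hlip : ∀ x y : ℝ, |f x - f y| ≤ (1 / (C₁ * h)) * |x - y|)
    (x₀ : ℝ) (hmin : ∀ x, f x₀ ≤ f x) :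
    ∀ x : ℝ, x₀ + h ≤ x →
      (⨅ y : ℝ, (f y + φ₁ (x - y))) ≤ f x - (C₁ / 2) * (f x - f (x - h)) ^ 2 := by
  obtain rfl : φ₀ = huber := funext hφ₀
  obtain rfl : φ₁ = fun x ↦ huber (x / h) / C₁ := funext hφ₁
  intro x hx
  set D := f x - f (x - h)
  have hD₀ : 0 ≤ D := sub_nonneg.2 <| hconv.monotoneOn_Ici_of_isMinOn (isMinOn_univ_iff.2 hmin)
    (mem_Ici.2 (by linarith)) (mem_Ici.2 (by linarith)) (by linarith)
  have hD₁ : C₁ * D ≤ 1 := by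
    have hlipx := (le_abs_self D).trans (hlip x (x - h))
    rw [sub_sub_cancel, abs_of_pos hh, one_div_mul_eq_div, div_mul_cancel_right₀ hh.ne'] at hlipx
    exact (le_div_iff₀' hC).1 (by simpa using hlipx)
  have hbdd : BddBelow (range fun y ↦ f y + huber ((x - y) / h) / C₁) :=
    ⟨f x₀, forall_mem_range.2 fun y ↦
      le_add_of_le_of_nonneg (hmin y) (div_nonneg (huber_nonneg _) hC.le)⟩
  have hth : C₁ * h * D / h = C₁ * D := by field_simp
  have hth₁ : C₁ * h * D ≤ h := by nlinarith [mul_le_mul_of_nonneg_left hD₁ hh.le]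
  calc (⨅ y, f y + huber ((x - y) / h) / C₁)
      ≤ f (x - C₁ * h * D) + huber ((x - (x - C₁ * h * D)) / h) / C₁ := ciInf_le hbdd _
    _ ≤ (f x - C₁ * D * D) + (C₁ * D) ^ 2 / 2 / C₁ := by
        gcongr
        · exact (hconv.apply_sub_le hh (by positivity) hth₁).trans_eq (by rw [hth])
        · rw [sub_sub_cancel, hth, huber_of_abs_le_one (by rwa [abs_of_nonneg (by positivity)])]
    _ = f x - C₁ / 2 * D ^ 2 := by field_simp; ring
end

section
/- Let φ₀(x) = x²/2 for |x| ≤ 1 and |x| − 1/2 for |x| > 1, C₁, h > 0, φ₁(x) = φ₀(x/h)/C₁. Let f: ℝ → ℝ be convex with |f′| ≤ 1/(C₁h), attaining its minimum at x₀. Define Df(x) as the discrete gradient: f(x)−f(x−h) for x > x₀+h, f(x)−f(x₀) for |x−x₀| ≤ h, f(x)−f(x+h) for x < x₀−h. Then for every x ∈ ℝ, (f □ φ₁)(x) ≤ f(x) − (C₁/2)·(Df(x))². -/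
open Real

private lemma chordR (f : ℝ → ℝ) (hconv : ConvexOn ℝ Set.univ f) (a b t : ℝ)
    (hab : a < b) (ht0 : 0 ≤ t) (htb : t ≤ b - a) :
    f (b - t) ≤ f b - t / (b - a) * (f b - f a) := by
  have hd : 0 < b - a := by linarith
  set l := t / (b - a) with hl
  have hl0 : 0 ≤ l := div_nonneg ht0 hd.le
  have hl1 : l ≤ 1 := by rw [hl, div_le_one hd]; linarith
  have key := hconv.2 (Set.mem_univ a) (Set.mem_univ b) hl0 (by linarith : (0:ℝ) ≤ 1 - l)
    (by ring)
  have heq : l • a + (1 - l) • b = b - t := by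
    simp only [smul_eq_mul, hl]
    field_simp
    ring
  rw [heq] at key
  simp only [smul_eq_mul] at key
  linarith

private lemma chordL (f : ℝ → ℝ) (hconv : ConvexOn ℝ Set.univ f) (a b t : ℝ)
    (hab : a < b) (ht0 : 0 ≤ t) (htb : t ≤ b - a) :
    f (a + t) ≤ f a - t / (b - a) * (f a - f b) := by
  have hd : 0 < b - a := by linarith
  set l := t / (b - a) with hl
  have hl0 : 0 ≤ l := div_nonneg ht0 hd.le
  have hl1 : l ≤ 1 := by rw [hl, div_le_one hd]; linarith
  have key := hconv.2 (Set.mem_univ b) (Set.mem_univ a) hl0 (by linarith : (0:ℝ) ≤ 1 - l)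
    (by ring)
  have heq : l • b + (1 - l) • a = a + t := by
    simp only [smul_eq_mul, hl]
    field_simp
    ring
  rw [heq] at key
  simp only [smul_eq_mul] at key
  linarith

private lemma monoR (f : ℝ → ℝ) (hconv : ConvexOn ℝ Set.univ f) (x₀ : ℝ)
    (hmin : ∀ x, f x₀ ≤ f x) (a b : ℝ) (ha : x₀ ≤ a) (hab : a ≤ b) : f a ≤ f b := by
  rcases eq_or_lt_of_le hab with rfl | hab'
  · exact le_rfl
  rcases eq_or_lt_of_le ha with rfl | ha'
  · exact hmin b
  have hd : 0 < b - x₀ := by linarith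
  set l := (b - a) / (b - x₀) with hl
  have hl0 : 0 ≤ l := div_nonneg (by linarith) hd.le
  have hl1 : l ≤ 1 := by rw [hl, div_le_one hd]; linarith
  have key := hconv.2 (Set.mem_univ x₀) (Set.mem_univ b) hl0 (by linarith : (0:ℝ) ≤ 1 - l)
    (by ring)
  have heq : l • x₀ + (1 - l) • b = a := by
    simp only [smul_eq_mul, hl]
    field_simp
    ring
  rw [heq] at key
  simp only [smul_eq_mul] at key
  nlinarith [key, mul_nonneg hl0 (sub_nonneg.2 (hmin b))]

private lemma monoL (f : ℝ → ℝ) (hconv : ConvexOn ℝ Set.univ f) (x₀ : ℝ)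
    (hmin : ∀ x, f x₀ ≤ f x) (a b : ℝ) (hab : a ≤ b) (hb : b ≤ x₀) : f b ≤ f a := by
  rcases eq_or_lt_of_le hab with rfl | hab'
  · exact le_rfl
  rcases eq_or_lt_of_le hb with rfl | hb'
  · exact hmin a
  have hd : 0 < x₀ - a := by linarith
  set l := (b - a) / (x₀ - a) with hl
  have hl0 : 0 ≤ l := div_nonneg (by linarith) hd.le
  have hl1 : l ≤ 1 := by rw [hl, div_le_one hd]; linarith
  have key := hconv.2 (Set.mem_univ x₀) (Set.mem_univ a) hl0 (by linarith : (0:ℝ) ≤ 1 - l)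
    (by ring)
  have heq : l • x₀ + (1 - l) • a = b := by
    simp only [smul_eq_mul, hl]
    field_simp
    ring
  rw [heq] at key
  simp only [smul_eq_mul] at key
  nlinarith [key, mul_nonneg hl0 (sub_nonneg.2 (hmin a))]

theorem stmt6 (C₁ h : ℝ) (hC : 0 < C₁) (hh : 0 < h)
    (φ₀ : ℝ → ℝ)
    (hφ₀ : ∀ x : ℝ, φ₀ x = if |x| ≤ 1 then x ^ 2 / 2 else |x| - 1 / 2)
    (φ₁ : ℝ → ℝ) (hφ₁ : ∀ x, φ₁ x = φ₀ (x / h) / C₁)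
    (f : ℝ → ℝ) (hconv : ConvexOn ℝ Set.univ f)
    (hlip : ∀ x y : ℝ, |f x - f y| ≤ (1 / (C₁ * h)) * |x - y|)
    (x₀ : ℝ) (hmin : ∀ x, f x₀ ≤ f x)
    (Df : ℝ → ℝ)
    (hDf1 : ∀ x, x₀ + h < x → Df x = f x - f (x - h))
    (hDf2 : ∀ x, |x - x₀| ≤ h → Df x = f x - f x₀)
    (hDf3 : ∀ x, x < x₀ - h → Df x = f x - f (x + h)) :
    ∀ x : ℝ, (⨅ y : ℝ, (f y + φ₁ (x - y))) ≤ f x - (C₁ / 2) * (Df x) ^ 2 := by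
  -- auxiliary facts about φ
  have phi0nn : ∀ u : ℝ, 0 ≤ φ₀ u := by
    intro u
    rw [hφ₀]
    split_ifs with hu
    · positivity
    · push_neg at hu; linarith
  have phi1nn : ∀ t : ℝ, 0 ≤ φ₁ t := by
    intro t
    rw [hφ₁]
    exact div_nonneg (phi0nn _) hC.le
  have phieval : ∀ t : ℝ, |t| ≤ h → φ₁ t = t ^ 2 / (2 * C₁ * h ^ 2) := by
    intro t ht
    rw [hφ₁, hφ₀]
    have h1 : |t / h| ≤ 1 := by
      rw [abs_div, abs_of_pos hh, div_le_one hh]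
      exact ht
    rw [if_pos h1, div_pow]
    ring
  intro x
  have hbdd : BddBelow (Set.range fun y => f y + φ₁ (x - y)) := by
    refine ⟨f x₀, ?_⟩
    rintro z ⟨y, rfl⟩
    have := hmin y
    have := phi1nn (x - y)
    simp only []
    linarith
  suffices hex : ∃ y, f y + φ₁ (x - y) ≤ f x - C₁ / 2 * Df x ^ 2 by
    obtain ⟨y, hy⟩ := hex
    exact ciInf_le_of_le hbdd y hy
  by_cases h1 : x₀ + h < x
  · -- right outer case
    rw [hDf1 x h1]
    set D := f x - f (x - h) with hD
    have hD0 : 0 ≤ D := by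
      have := monoR f hconv x₀ hmin (x - h) x (by linarith) (by linarith)
      linarith
    have hD1 : D ≤ 1 / C₁ := by
      have hl := hlip x (x - h)
      have habs : |x - (x - h)| = h := by rw [show x - (x - h) = h by ring, abs_of_pos hh]
      rw [habs] at hl
      have := le_abs_self (f x - f (x - h))
      have hne : (1 / (C₁ * h)) * h = 1 / C₁ := by field_simp
      rw [hne] at hl
      linarith
    set t := C₁ * h * D with ht
    have ht0 : 0 ≤ t := by positivity
    have hth : t ≤ h := by
      have : C₁ * h * D ≤ C₁ * h * (1 / C₁) := by
        apply mul_le_mul_of_nonneg_left hD1 (by positivity)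
      have he : C₁ * h * (1 / C₁) = h := by field_simp
      rw [he] at this
      linarith
    have hc := chordR f hconv (x - h) x t (by linarith) ht0 (by linarith [show x - (x - h) = h from by ring])
    have hde : x - (x - h) = h := by ring
    rw [hde] at hc
    have hdiv : t / h = C₁ * D := by rw [ht]; field_simp
    rw [hdiv, ← hD] at hc
    refine ⟨x - t, ?_⟩
    have hxy : x - (x - t) = t := by ring
    rw [hxy, phieval t (by rw [abs_of_nonneg ht0]; exact hth)]
    have hpe : t ^ 2 / (2 * C₁ * h ^ 2) = C₁ * D ^ 2 / 2 := by
      rw [ht]; field_simp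
    rw [hpe]
    clear_value t D
    nlinarith [hc]
  · by_cases h2 : x < x₀ - h
    · -- left outer case
      rw [hDf3 x h2]
      set D := f x - f (x + h) with hD
      have hD0 : 0 ≤ D := by
        have := monoL f hconv x₀ hmin x (x + h) (by linarith) (by linarith)
        linarith
      have hD1 : D ≤ 1 / C₁ := by
        have hl := hlip x (x + h)
        have habs : |x - (x + h)| = h := by
          rw [show x - (x + h) = -h by ring, abs_neg, abs_of_pos hh]
        rw [habs] at hl
        have := le_abs_self (f x - f (x + h))
        have hne : (1 / (C₁ * h)) * h = 1 / C₁ := by field_simp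
        rw [hne] at hl
        linarith
      set t := C₁ * h * D with ht
      have ht0 : 0 ≤ t := by positivity
      have hth : t ≤ h := by
        have : C₁ * h * D ≤ C₁ * h * (1 / C₁) := by
          apply mul_le_mul_of_nonneg_left hD1 (by positivity)
        have he : C₁ * h * (1 / C₁) = h := by field_simp
        rw [he] at this
        linarith
      have hc := chordL f hconv x (x + h) t (by linarith) ht0 (by linarith [show x + h - x = h from by ring])
      have hde : x + h - x = h := by ring
      rw [hde] at hc
      have hdiv : t / h = C₁ * D := by rw [ht]; field_simp
      rw [hdiv, ← hD] at hc
      refine ⟨x + t, ?_⟩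
      have hxy : x - (x + t) = -t := by ring
      rw [hxy, phieval (-t) (by rw [abs_neg, abs_of_nonneg ht0]; exact hth)]
      have hpe : (-t) ^ 2 / (2 * C₁ * h ^ 2) = C₁ * D ^ 2 / 2 := by
        rw [ht]; field_simp
      rw [hpe]
      clear_value t D
      nlinarith [hc]
    · -- middle case
      push_neg at h1 h2
      have hmid : |x - x₀| ≤ h := abs_le.2 ⟨by linarith, by linarith⟩
      rw [hDf2 x hmid]
      set D := f x - f x₀ with hD
      rcases lt_trichotomy x x₀ with hx | hx | hx
      · -- x < x₀
        set d := x₀ - x with hdd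
        have hd0 : 0 < d := by linarith
        have hdh : d ≤ h := by linarith
        have hD0 : 0 ≤ D := by
          have := monoL f hconv x₀ hmin x x₀ (by linarith) le_rfl
          linarith
        have hD1 : D ≤ d / (C₁ * h) := by
          have hl := hlip x x₀
          have habs : |x - x₀| = d := by rw [abs_of_nonpos (by linarith)]; ring
          rw [habs] at hl
          have := le_abs_self (f x - f x₀)
          have hne : (1 / (C₁ * h)) * d = d / (C₁ * h) := by ring
          rw [hne] at hl
          linarith
        set t := C₁ * h * D with ht
        have ht0 : 0 ≤ t := by positivity
        have htd : t ≤ d := by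
          have : C₁ * h * D ≤ C₁ * h * (d / (C₁ * h)) := by
            apply mul_le_mul_of_nonneg_left hD1 (by positivity)
          have he : C₁ * h * (d / (C₁ * h)) = d := by field_simp
          rw [he] at this
          linarith
        have hc := chordL f hconv x x₀ t (by linarith) ht0 (by linarith [show x₀ - x = d from rfl])
        have hde : x₀ - x = d := rfl
        rw [hde, ← hD] at hc
        -- hc : f (x + t) ≤ f x - t / d * (f x - f x₀)
        have hkey : C₁ * D ^ 2 ≤ t / d * D := by
          have h1' : t / h ≤ t / d := by
            apply div_le_div_of_nonneg_left ht0 hd0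
            exact hdh
          have h2' : t / h = C₁ * D := by rw [ht]; field_simp
          calc C₁ * D ^ 2 = (t / h) * D := by rw [h2']; ring
            _ ≤ t / d * D := mul_le_mul_of_nonneg_right h1' hD0
        refine ⟨x + t, ?_⟩
        have hxy : x - (x + t) = -t := by ring
        rw [hxy, phieval (-t) (by rw [abs_neg, abs_of_nonneg ht0]; linarith)]
        have hpe : (-t) ^ 2 / (2 * C₁ * h ^ 2) = C₁ * D ^ 2 / 2 := by
          rw [ht]; field_simp
        rw [hpe]
        clear_value t D
        nlinarith [hc, hkey]
      · -- x = x₀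
        subst hx
        refine ⟨x, ?_⟩
        have : x - x = (0:ℝ) := by ring
        rw [this, phieval 0 (by simpa using hh.le)]
        have hD' : D = 0 := by rw [hD]; ring
        rw [hD']
        norm_num
      · -- x > x₀
        set d := x - x₀ with hdd
        have hd0 : 0 < d := by linarith
        have hdh : d ≤ h := by linarith
        have hD0 : 0 ≤ D := by
          have := monoR f hconv x₀ hmin x₀ x le_rfl (by linarith)
          linarith
        have hD1 : D ≤ d / (C₁ * h) := by
          have hl := hlip x x₀
          have habs : |x - x₀| = d := abs_of_pos hd0
          rw [habs] at hl
          have := le_abs_self (f x - f x₀)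
          have hne : (1 / (C₁ * h)) * d = d / (C₁ * h) := by ring
          rw [hne] at hl
          linarith
        set t := C₁ * h * D with ht
        have ht0 : 0 ≤ t := by positivity
        have htd : t ≤ d := by
          have : C₁ * h * D ≤ C₁ * h * (d / (C₁ * h)) := by
            apply mul_le_mul_of_nonneg_left hD1 (by positivity)
          have he : C₁ * h * (d / (C₁ * h)) = d := by field_simp
          rw [he] at this
          linarith
        have hc := chordR f hconv x₀ x t (by linarith) ht0 (by linarith [show x - x₀ = d from rfl])
        have hde : x - x₀ = d := rfl
        rw [hde, ← hD] at hc
        have hkey : C₁ * D ^ 2 ≤ t / d * D := by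
          have h1' : t / h ≤ t / d := by
            apply div_le_div_of_nonneg_left ht0 hd0
            exact hdh
          have h2' : t / h = C₁ * D := by rw [ht]; field_simp
          calc C₁ * D ^ 2 = (t / h) * D := by rw [h2']; ring
            _ ≤ t / d * D := mul_le_mul_of_nonneg_right h1' hD0
        refine ⟨x - t, ?_⟩
        have hxy : x - (x - t) = t := by ring
        rw [hxy, phieval t (by rw [abs_of_nonneg ht0]; linarith)]
        have hpe : t ^ 2 / (2 * C₁ * h ^ 2) = C₁ * D ^ 2 / 2 := by
          rw [ht]; field_simp
        rw [hpe]
        clear_value t D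
        nlinarith [hc, hkey]
end

section
/- Let μ be a symmetric probability measure on ℝ and f_u(x) = max{x − u, 0} for u ≥ 0. Then Var_μ(f_u) ≥ (1/4)·∫ f_u² dμ ≥ (1/4)·s²·μ[u+s, ∞) for any s > 0. -/
/-!
By symmetry, `μ (u, ∞) ≤ μ (0, ∞) ≤ 1/2` for `u ≥ 0`. Since `f_u` vanishes off `(u, ∞)`,
Cauchy–Schwarz gives `(∫ f_u dμ)² ≤ μ (u, ∞) · ∫ f_u² dμ ≤ (1/2) ∫ f_u² dμ`, hence
`Var_μ f_u ≥ (1/2) ∫ f_u² dμ`. The tail bound is Chebyshev's inequality for `f_u²`, which is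
at least `s²` on `[u + s, ∞)`.
-/

open MeasureTheory Set Real ProbabilityTheory

lemma sq_lintegral_le_measure_mul_lintegral_sq {α : Type*} [MeasurableSpace α] {μ : Measure α}
    {f : α → ENNReal} (hf : AEMeasurable f μ)
    {s : Set α} (hs : MeasurableSet s) (hfs : ∀ x ∉ s, f x = 0) :
    (∫⁻ x, f x ∂μ) ^ 2 ≤ μ s * ∫⁻ x, f x ^ 2 ∂μ := by
  have holder := ENNReal.lintegral_mul_le_Lp_mul_Lq μ Real.HolderConjugate.two_two
    (g := s.indicator 1) hf (measurable_one.indicator hs).aemeasurable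
  have hmul : ∫⁻ x, (f * s.indicator (1 : α → ENNReal)) x ∂μ = ∫⁻ x, f x ∂μ := by
    refine lintegral_congr fun x => ?_
    by_cases hx : x ∈ s <;> simp [hx, hfs]
  have hind : ∫⁻ x, s.indicator (1 : α → ENNReal) x ^ (2 : ℝ) ∂μ = μ s := by
    rw [← lintegral_indicator_one hs]
    refine lintegral_congr fun x => ?_
    by_cases hx : x ∈ s <;> simp [hx]
  rw [hmul, hind] at holder
  simp only [ENNReal.rpow_two] at holder
  calc (∫⁻ x, f x ∂μ) ^ 2
      ≤ ((∫⁻ x, f x ^ 2 ∂μ) ^ (1 / 2 : ℝ) * μ s ^ (1 / 2 : ℝ)) ^ 2 := pow_le_pow_left' holder 2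
    _ = μ s * ∫⁻ x, f x ^ 2 ∂μ := by
      rw [mul_pow, ← ENNReal.rpow_natCast, ← ENNReal.rpow_natCast (μ s ^ _), ← ENNReal.rpow_mul,
        ← ENNReal.rpow_mul]
      norm_num [mul_comm]

lemma one_sub_measure_mul_lintegral_sq_le_evariance {Ω : Type*} [MeasurableSpace Ω]
    {μ : Measure Ω} [IsProbabilityMeasure μ] {X : Ω → ℝ} (hX : AEStronglyMeasurable X μ)
    {s : Set Ω} (hs : MeasurableSet s) (hXs : ∀ ω ∉ s, X ω = 0) :
    (1 - μ s) * ∫⁻ ω, ENNReal.ofReal (X ω ^ 2) ∂μ ≤ evariance X μ := by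
  have hsq (a : ℝ) : ENNReal.ofReal (a ^ 2) = ‖a‖ₑ ^ 2 := by
    rw [← enorm_pow, Real.enorm_of_nonneg (sq_nonneg _)]
  simp only [hsq]
  set I := ∫⁻ ω, ‖X ω‖ₑ ^ 2 ∂μ
  have hmean : ENNReal.ofReal (μ[X] ^ 2) ≤ μ s * I :=
    calc ENNReal.ofReal (μ[X] ^ 2) = ‖μ[X]‖ₑ ^ 2 := hsq _
      _ ≤ (∫⁻ ω, ‖X ω‖ₑ ∂μ) ^ 2 := by gcongr; exact enorm_integral_le_lintegral_enorm X
      _ ≤ μ s * I :=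
          sq_lintegral_le_measure_mul_lintegral_sq hX.enorm hs fun ω hω => by simp [hXs ω hω]
  rw [evariance_def' hX]
  refine ENNReal.le_sub_of_add_le_right ENNReal.ofReal_ne_top ?_
  calc (1 - μ s) * I + ENNReal.ofReal (μ[X] ^ 2) ≤ (1 - μ s) * I + μ s * I := by gcongr
    _ = I := by rw [← add_mul, tsub_add_cancel_of_le prob_le_one, one_mul]

lemma measure_Ioi_le_half_of_map_neg_eq {μ : Measure ℝ} [IsProbabilityMeasure μ]
    (hsym : μ.map (fun x => -x) = μ) {u : ℝ} (hu : 0 ≤ u) : μ (Ioi u) ≤ 2⁻¹ := by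
  have hneg : μ (Ioi 0) = μ (Iio 0) := by
    conv_rhs => rw [← hsym, Measure.map_apply (by fun_prop) measurableSet_Iio]
    simp [preimage, Ioi]
  have hsum : μ (Ioi 0) + μ (Iio 0) ≤ 1 := by
    rw [← measure_union Ioi_disjoint_Iio_same measurableSet_Iio]
    exact prob_le_one
  calc μ (Ioi u) ≤ μ (Ioi 0) := measure_mono (Ioi_subset_Ioi hu)
    _ ≤ 2⁻¹ := by
      rw [ENNReal.le_inv_iff_mul_le, mul_two]
      rwa [hneg] at hsum ⊢

theorem stmt9 (μ : Measure ℝ) [IsProbabilityMeasure μ]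
    (hsym : μ.map (fun x => -x) = μ)
    (u : ℝ) (hu : 0 ≤ u) (s : ℝ) (hs : 0 < s) :
    ENNReal.ofReal (1 / 4) * ∫⁻ x, ENNReal.ofReal ((max (x - u) 0) ^ 2) ∂μ ≤
        evariance (fun x => max (x - u) 0) μ ∧
      ENNReal.ofReal (1 / 4 * s ^ 2) * μ (Set.Ici (u + s)) ≤
        ENNReal.ofReal (1 / 4) * ∫⁻ x, ENNReal.ofReal ((max (x - u) 0) ^ 2) ∂μ := by
  have hvar := one_sub_measure_mul_lintegral_sq_le_evariance (μ := μ)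
    (X := fun x => max (x - u) 0) (by fun_prop) measurableSet_Ioi
    fun x hx => max_eq_right (by simpa using hx)
  have hquarter : ENNReal.ofReal (1 / 4) ≤ 1 - μ (Ioi u) :=
    calc ENNReal.ofReal (1 / 4) ≤ 1 - 2⁻¹ := by norm_num [ENNReal.ofReal_div_of_pos]
      _ ≤ 1 - μ (Ioi u) := by gcongr; exact measure_Ioi_le_half_of_map_neg_eq hsym hu
  refine ⟨le_trans (by gcongr) hvar, ?_⟩
  rw [ENNReal.ofReal_mul (by norm_num), mul_assoc]
  gcongr
  calc ENNReal.ofReal (s ^ 2) * μ (Ici (u + s))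
      ≤ ENNReal.ofReal (s ^ 2) * μ {x | ENNReal.ofReal (s ^ 2) ≤ .ofReal (max (x - u) 0 ^ 2)} := by
        refine mul_le_mul_right (measure_mono fun x hx => ?_) _
        have : s ≤ max (x - u) 0 := le_max_of_le_left (by simp only [mem_Ici] at hx; linarith)
        exact ENNReal.ofReal_le_ofReal (pow_le_pow_left₀ hs.le this 2)
    _ ≤ _ := mul_meas_ge_le_lintegral₀ (by fun_prop) _
end

section
/- Let φ₀(x) = x²/2 for |x| ≤ 1 and |x| − 1/2 otherwise, and C_τ > 0. For x ∈ ℝⁿ with Σᵢφ₀(xᵢ/C_τ) ≤ t, one can write x = y + z with |y|₂ ≤ C_τ√(2t) and |z|₁ ≤ 2tC_τ; consequently {x ∈ ℝⁿ : Σᵢφ₀(xᵢ/C_τ) ≤ t} ⊆ C_τ√(2t)·B₂ⁿ + 2tC_τ·B₁ⁿ. -/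
open Real Pointwise

theorem stmt10 (n : ℕ) (Cτ t : ℝ) (hC : 0 < Cτ) (ht : 0 ≤ t)
    (φ₀ : ℝ → ℝ)
    (hφ₀ : ∀ x : ℝ, φ₀ x = if |x| ≤ 1 then x ^ 2 / 2 else |x| - 1 / 2) :
    (∀ x : Fin n → ℝ, (∑ i, φ₀ (x i / Cτ)) ≤ t →
      ∃ y z : Fin n → ℝ, x = y + z ∧
        Real.sqrt (∑ i, (y i) ^ 2) ≤ Cτ * Real.sqrt (2 * t) ∧
        (∑ i, |z i|) ≤ 2 * t * Cτ) ∧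
    {x : Fin n → ℝ | (∑ i, φ₀ (x i / Cτ)) ≤ t} ⊆
      {y : Fin n → ℝ | Real.sqrt (∑ i, (y i) ^ 2) ≤ Cτ * Real.sqrt (2 * t)} +
        {z : Fin n → ℝ | (∑ i, |z i|) ≤ 2 * t * Cτ} := by
  have hφnn : ∀ u : ℝ, 0 ≤ φ₀ u := by
    intro u
    rw [hφ₀]
    split_ifs with h
    · positivity
    · push_neg at h; linarith
  have key : ∀ x : Fin n → ℝ, (∑ i, φ₀ (x i / Cτ)) ≤ t →
      ∃ y z : Fin n → ℝ, x = y + z ∧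
        Real.sqrt (∑ i, (y i) ^ 2) ≤ Cτ * Real.sqrt (2 * t) ∧
        (∑ i, |z i|) ≤ 2 * t * Cτ := by
    intro x hx
    refine ⟨fun i => if |x i| ≤ Cτ then x i else 0,
           fun i => if |x i| ≤ Cτ then 0 else x i, ?_, ?_, ?_⟩
    · funext i
      simp only [Pi.add_apply]
      split_ifs <;> ring
    · have hsum : (∑ i, (if |x i| ≤ Cτ then x i else 0) ^ 2) ≤ 2 * Cτ ^ 2 * t := by
        calc (∑ i, (if |x i| ≤ Cτ then x i else 0) ^ 2)
            ≤ ∑ i, 2 * Cτ ^ 2 * φ₀ (x i / Cτ) := by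
              apply Finset.sum_le_sum
              intro i _
              split_ifs with h
              · rw [hφ₀]
                rw [if_pos]
                · have : 2 * Cτ ^ 2 * ((x i / Cτ) ^ 2 / 2) = x i ^ 2 := by
                    field_simp
                  exact le_of_eq this.symm
                · rw [abs_div, abs_of_pos hC, div_le_one hC]; exact h
              · nlinarith [hφnn (x i / Cτ), sq_nonneg Cτ]
          _ = 2 * Cτ ^ 2 * ∑ i, φ₀ (x i / Cτ) := by rw [Finset.mul_sum]
          _ ≤ 2 * Cτ ^ 2 * t := by nlinarith
      calc Real.sqrt (∑ i, (if |x i| ≤ Cτ then x i else 0) ^ 2)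
          ≤ Real.sqrt (2 * Cτ ^ 2 * t) := Real.sqrt_le_sqrt hsum
        _ = Cτ * Real.sqrt (2 * t) := by
            rw [show 2 * Cτ ^ 2 * t = Cτ ^ 2 * (2 * t) by ring,
              Real.sqrt_mul (by positivity), Real.sqrt_sq hC.le]
    · calc (∑ i, |if |x i| ≤ Cτ then 0 else x i|)
          ≤ ∑ i, 2 * Cτ * φ₀ (x i / Cτ) := by
            apply Finset.sum_le_sum
            intro i _
            split_ifs with h
            · have := hφnn (x i / Cτ); simp; positivity
            · push_neg at h
              rw [hφ₀, if_neg]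
              · rw [abs_div, abs_of_pos hC]
                have : 2 * Cτ * (|x i| / Cτ - 1 / 2) = 2 * |x i| - Cτ := by
                  field_simp
                rw [this]; linarith
              · rw [abs_div, abs_of_pos hC]; push_neg
                rw [lt_div_iff₀ hC]; linarith
        _ = 2 * Cτ * ∑ i, φ₀ (x i / Cτ) := by rw [Finset.mul_sum]
        _ ≤ 2 * t * Cτ := by nlinarith
  refine ⟨key, ?_⟩
  intro x hx
  obtain ⟨y, z, hxyz, hy, hz⟩ := key x hx
  exact ⟨y, hy, z, hz, hxyz.symm⟩
end

section
/- Let μ be a Borel probability measure on ℝ satisfying the convex exponential property (τ) with constant C_τ: (∫e^{f□φ}dμ)(∫e^{−f}dμ) ≤ 1 for all bounded-below convex f, where φ(x) = φ₀(x/C_τ) and φ₀(x) = x²/2 for |x| ≤ 1, |x| − 1/2 otherwise. Then ∫e^{|x|/C_τ}dμ(x) < ∞. -/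
/-!
Test property (τ) with `f x = |x| / Cτ`. Since `φ₀ u ≥ |u| - 1/2`, the triangle inequality
gives `(f □ φ) x ≥ |x| / Cτ - 1/2`, while `∫ e^{-f} dμ > 0`; so (τ) forces
`∫ e^{f □ φ} dμ < ∞`, and `e^{|x| / Cτ} ≤ e^{1/2} e^{(f □ φ) x}` transfers this finiteness.
-/

open MeasureTheory Set Real

lemma abs_sub_half_le_huber (u : ℝ) :
    |u| - 1 / 2 ≤ if |u| ≤ 1 then u ^ 2 / 2 else |u| - 1 / 2 := by
  split_ifs
  · nlinarith [sq_abs u, sq_nonneg (|u| - 1)]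
  · exact le_rfl

lemma convexOn_abs_div {c : ℝ} (hc : 0 ≤ c) : ConvexOn ℝ univ fun x : ℝ => |x| / c := by
  simpa only [smul_eq_mul, Real.norm_eq_abs, div_eq_inv_mul] using
    (convexOn_univ_norm (E := ℝ)).smul (inv_nonneg.2 hc)

lemma abs_div_sub_le_ciInf_abs_div_add {c b : ℝ} (hc : 0 < c) {ψ : ℝ → ℝ}
    (hψ : ∀ u, |u| - b ≤ ψ u) (x : ℝ) :
    |x| / c - b ≤ ⨅ y, (|y| / c + ψ ((x - y) / c)) := by
  refine le_ciInf fun y => ?_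
  have htri : |x| / c ≤ |y| / c + |x - y| / c := by
    rw [← add_div]
    gcongr
    linarith [abs_sub_abs_le_abs_sub x y]
  calc |x| / c - b ≤ |y| / c + (|(x - y) / c| - b) := by
        rw [abs_div, abs_of_pos hc]; linarith
    _ ≤ |y| / c + ψ ((x - y) / c) := by gcongr; exact hψ _

section lintegral_exp

variable {α : Type*} [MeasurableSpace α] {μ : Measure α}

lemma lintegral_ofReal_exp_ne_zero [NeZero μ] {g : α → ℝ} (hg : AEMeasurable g μ) :
    ∫⁻ x, ENNReal.ofReal (exp (g x)) ∂μ ≠ 0 := by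
  rw [Ne, lintegral_eq_zero_iff' (by fun_prop)]
  intro h
  have hfalse : ∀ᵐ _ ∂μ, False :=
    h.mono fun x hx => (exp_pos (g x)).not_ge (ENNReal.ofReal_eq_zero.1 hx)
  exact NeZero.ne μ (ae_eq_bot.1 (Filter.eventually_false_iff_eq_bot.1 hfalse))

lemma lintegral_ofReal_exp_lt_top_of_le_add {g h : α → ℝ} (b : ℝ)
    (hgh : ∀ x, g x ≤ h x + b)
    (hh : ∫⁻ x, ENNReal.ofReal (exp (h x)) ∂μ < ⊤) :
    ∫⁻ x, ENNReal.ofReal (exp (g x)) ∂μ < ⊤ :=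
  calc ∫⁻ x, ENNReal.ofReal (exp (g x)) ∂μ
      ≤ ∫⁻ x, ENNReal.ofReal (exp b) * ENNReal.ofReal (exp (h x)) ∂μ := by
        refine lintegral_mono fun x => ?_
        rw [← ENNReal.ofReal_mul (exp_pos b).le, ← exp_add]
        gcongr
        linarith [hgh x]
    _ = ENNReal.ofReal (exp b) * ∫⁻ x, ENNReal.ofReal (exp (h x)) ∂μ :=
        lintegral_const_mul' _ _ ENNReal.ofReal_ne_top
    _ < ⊤ := ENNReal.mul_lt_top ENNReal.ofReal_lt_top hh

end lintegral_exp

theorem stmt19 (μ : Measure ℝ) [IsProbabilityMeasure μ]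
    (Cτ : ℝ) (hCτ : 0 < Cτ)
    (φ₀ : ℝ → ℝ)
    (hφ₀ : ∀ x : ℝ, φ₀ x = if |x| ≤ 1 then x ^ 2 / 2 else |x| - 1 / 2)
    (htau : ∀ f : ℝ → ℝ, ConvexOn ℝ Set.univ f → BddBelow (Set.range f) →
      (∫⁻ x, ENNReal.ofReal (Real.exp (⨅ y, (f y + φ₀ ((x - y) / Cτ)))) ∂μ) *
        (∫⁻ x, ENNReal.ofReal (Real.exp (-f x)) ∂μ) ≤ 1) :
    ∫⁻ x, ENNReal.ofReal (Real.exp (|x| / Cτ)) ∂μ < ⊤ := by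
  have hφ₀_ge (u : ℝ) : |u| - 1 / 2 ≤ φ₀ u := (hφ₀ u).symm ▸ abs_sub_half_le_huber u
  have hbdd : BddBelow (range fun x : ℝ => |x| / Cτ) := ⟨0, by rintro _ ⟨x, rfl⟩; positivity⟩
  have htest := htau _ (convexOn_abs_div hCτ.le) hbdd
  have hpos : ∫⁻ x, ENNReal.ofReal (exp (-(|x| / Cτ))) ∂μ ≠ 0 :=
    lintegral_ofReal_exp_ne_zero (by fun_prop)
  have hfin :=
    ENNReal.lt_top_of_mul_ne_top_left (ne_top_of_le_ne_top ENNReal.one_ne_top htest) hpos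
  refine lintegral_ofReal_exp_lt_top_of_le_add (1 / 2) (fun x => ?_) hfin
  linarith [abs_div_sub_le_ciInf_abs_div_add hCτ hφ₀_ge x]
end
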